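/- arXiv:cs/0603059 — 6 statements merged into one kernel-verified Lean document; each statement's English description precedes it below -/
import Mathlib

section
/- At a Black Hole, the hidden Markov chain is a Markov chain: if every Δ_a has rank one and every column of Δ_a is either strictly positive or identically zero, and all word probabilities are strictly positive, then for every k ≥ 1 and every word (z_{-k},…,z_{-1},z_0) ∈ {1,…,A}^{k+1} one has p(z_{-k}⋯z_{-1}z_0)/p(z_{-k}⋯z_{-1}) = p(z_{-1}z_0)/p(z_{-1}). -/
open Matrix

/-- The matrix `Δ_a`: keep the columns `j` with `Φ j = a`, zero out the rest. -/
def deltaSub {B A : ℕ} (Δ : Matrix (Fin B) (Fin B) ℝ) (Φ : Fin B → Fin A) (a : Fin A) :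
    Matrix (Fin B) (Fin B) ℝ :=
  fun i j => if Φ j = a then Δ i j else 0

/-- The probability of the word `z_1 ⋯ z_n`, namely `π Δ_{z_1} ⋯ Δ_{z_n} 𝟙`. -/
def wordProb {B A : ℕ} (π : Fin B → ℝ) (Δ : Matrix (Fin B) (Fin B) ℝ) (Φ : Fin B → Fin A)
    (w : List (Fin A)) : ℝ :=
  dotProduct (Matrix.vecMul π ((w.map (deltaSub Δ Φ)).prod)) (fun _ => 1)

/-- A Black Hole: every `Δ_a` has rank one and each of its columns is strictly positive
or identically zero. -/
def IsBlackHole {B A : ℕ} (Δ : Matrix (Fin B) (Fin B) ℝ) (Φ : Fin B → Fin A) : Prop :=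
  ∀ a : Fin A, (deltaSub Δ Φ a).rank = 1 ∧
    ∀ j : Fin B, (∀ i : Fin B, 0 < deltaSub Δ Φ a i j) ∨ (∀ i : Fin B, deltaSub Δ Φ a i j = 0)

/-- A rank-one matrix has all the images `v ᵥ* M` proportional to a single row `r`. -/
lemma rows_proportional {B : ℕ} (M : Matrix (Fin B) (Fin B) ℝ) (h : M.rank = 1) :
    ∃ r : Fin B → ℝ, ∀ v : Fin B → ℝ, ∃ s : ℝ, Matrix.vecMul v M = s • r := by
  have h' : Mᵀ.rank = 1 := by rw [Matrix.rank_transpose]; exact h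
  rw [Matrix.rank] at h'
  obtain ⟨v, hv⟩ := finrank_le_one_iff.mp h'.le
  refine ⟨(v : Fin B → ℝ), fun u => ?_⟩
  have hm : Matrix.vecMul u M ∈ LinearMap.range Mᵀ.mulVecLin :=
    ⟨u, by simp [Matrix.mulVecLin_apply, Matrix.mulVec_transpose]⟩
  obtain ⟨c, hc⟩ := hv ⟨_, hm⟩
  exact ⟨c, by simpa using congrArg Subtype.val hc.symm⟩

/-- Key ratio computation: if all images of `Da` are proportional to `r`, ratios agree. -/
lemma key_ratio {B : ℕ} (Da Db : Matrix (Fin B) (Fin B) ℝ) (r : Fin B → ℝ)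
    (u v : Fin B → ℝ) (s t : ℝ)
    (hu : Matrix.vecMul u Da = s • r) (hv : Matrix.vecMul v Da = t • r)
    (hupos : 0 < dotProduct (Matrix.vecMul u Da) (fun _ => 1))
    (hvpos : 0 < dotProduct (Matrix.vecMul v Da) (fun _ => 1)) :
    dotProduct (Matrix.vecMul (Matrix.vecMul u Da) Db) (fun _ => 1) /
        dotProduct (Matrix.vecMul u Da) (fun _ => 1) =
      dotProduct (Matrix.vecMul (Matrix.vecMul v Da) Db) (fun _ => 1) /
        dotProduct (Matrix.vecMul v Da) (fun _ => 1) := by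
  rw [hu] at hupos ⊢
  rw [hv] at hvpos ⊢
  simp only [Matrix.smul_vecMul, smul_dotProduct, smul_eq_mul] at hupos hvpos ⊢
  have hs : s ≠ 0 := by rintro rfl; simp at hupos
  have ht : t ≠ 0 := by rintro rfl; simp at hvpos
  rw [mul_div_mul_left _ _ hs, mul_div_mul_left _ _ ht]

set_option maxHeartbeats 1000000 in
/-- At a Black Hole the hidden Markov chain is a Markov chain:
`p(z_{-k}⋯z_0)/p(z_{-k}⋯z_{-1}) = p(z_{-1}z_0)/p(z_{-1})`. -/
theorem blackHole_is_markov {B A : ℕ} (hB : 1 ≤ B) (hA : 1 ≤ A)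
    (Δ : Matrix (Fin B) (Fin B) ℝ) (Φ : Fin B → Fin A) (π : Fin B → ℝ)
    (hΔnonneg : ∀ i j, 0 ≤ Δ i j) (hΔrowsum : ∀ i, ∑ j, Δ i j = 1)
    (hπnonneg : ∀ i, 0 ≤ π i) (hπsum : ∑ i, π i = 1)
    (hπstat : Matrix.vecMul π Δ = π)
    (hblackhole : IsBlackHole Δ Φ)
    (hpos : ∀ w : List (Fin A), w ≠ [] → 0 < wordProb π Δ Φ w) :
    ∀ k : ℕ, 1 ≤ k → ∀ z : Fin (k + 1) → Fin A,
      wordProb π Δ Φ (List.ofFn z) / wordProb π Δ Φ (List.ofFn z).dropLast =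
        wordProb π Δ Φ [z ⟨k - 1, by omega⟩, z ⟨k, by omega⟩] /
          wordProb π Δ Φ [z ⟨k - 1, by omega⟩] := by
  intro k hk z
  obtain ⟨m, rfl⟩ : ∃ m, k = m + 1 := ⟨k - 1, by omega⟩
  set D : Fin A → Matrix (Fin B) (Fin B) ℝ := deltaSub Δ Φ with hD
  set l : List (Fin A) := List.ofFn (fun i : Fin m => z i.castSucc.castSucc) with hl
  set a : Fin A := z ⟨m, by omega⟩ with ha
  set b : Fin A := z ⟨m + 1, by omega⟩ with hb
  have hofn : List.ofFn z = l ++ [a, b] := by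
    rw [List.ofFn_succ' z, List.ofFn_succ']
    simp only [List.concat_eq_append, List.append_assoc, List.singleton_append]
    rfl
  have hidx1 : z ⟨m + 1 - 1, by omega⟩ = a := rfl
  have hidx2 : z ⟨m + 1, by omega⟩ = b := rfl
  have hdrop : (List.ofFn z).dropLast = l ++ [a] := by
    rw [hofn]
    simp
  rw [hdrop, hofn, hidx1]
  obtain ⟨r, hr⟩ := rows_proportional (D a) (hblackhole a).1
  obtain ⟨s, hs⟩ := hr (Matrix.vecMul π ((l.map D).prod))
  obtain ⟨t, ht⟩ := hr π
  have e1 : wordProb π Δ Φ (l ++ [a, b]) =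
      dotProduct (Matrix.vecMul (Matrix.vecMul (Matrix.vecMul π ((l.map D).prod)) (D a))
        (D b)) (fun _ => 1) := by
    simp [wordProb, ← Matrix.vecMul_vecMul, ← hD, mul_assoc]
  have e2 : wordProb π Δ Φ (l ++ [a]) =
      dotProduct (Matrix.vecMul (Matrix.vecMul π ((l.map D).prod)) (D a)) (fun _ => 1) := by
    simp [wordProb, ← Matrix.vecMul_vecMul, ← hD]
  have e3 : wordProb π Δ Φ [a, b] =
      dotProduct (Matrix.vecMul (Matrix.vecMul π (D a)) (D b)) (fun _ => 1) := by
    simp [wordProb, ← Matrix.vecMul_vecMul, ← hD]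
  have e4 : wordProb π Δ Φ [a] =
      dotProduct (Matrix.vecMul π (D a)) (fun _ => 1) := by
    simp [wordProb, ← hD]
  have hupos : 0 < dotProduct (Matrix.vecMul (Matrix.vecMul π ((l.map D).prod)) (D a))
      (fun _ => 1) := by
    rw [← e2]; exact hpos _ (by simp)
  have hvpos : 0 < dotProduct (Matrix.vecMul π (D a)) (fun _ => 1) := by
    rw [← e4]; exact hpos _ (by simp)
  rw [e1, e2, e3, e4]
  exact key_ratio (D a) (D b) r _ π s t hs ht hupos hvpos
end

section
/- Stabilization of derivatives of conditional probabilities at a Black Hole: if Δ(ε̂) is a Black Hole, then for every N ≥ 0, every k ≥ N+1, and every word (z_{-k},…,z_0) ∈ {1,…,A}^{k+1}, the N-th derivative in ε of the conditional probability satisfies (d^N/dε^N)[p(z_{-k}⋯z_0)/p(z_{-k}⋯z_{-1})] |_{ε=ε̂} = (d^N/dε^N)[p(z_{-N-1}⋯z_0)/p(z_{-N-1}⋯z_{-1})] |_{ε=ε̂}, where the right side uses only the last N+1 symbols preceding z_0. -/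
open Matrix

open scoped ContDiff

namespace BHAux

/-! ### Vanishing order machinery -/

/-- order-of-vanishing predicate: all derivatives of order `< m` vanish at `ε₀` -/
def Ord (ε₀ : ℝ) (m : ℕ) (f : ℝ → ℝ) : Prop := ∀ j < m, iteratedDeriv j f ε₀ = 0

theorem iter_congr {ε₀ : ℝ} {f g : ℝ → ℝ} (h : f =ᶠ[nhds ε₀] g) :
    ∀ n, iteratedDeriv n f ε₀ = iteratedDeriv n g ε₀ := by
  intro n
  induction n generalizing f g with
  | zero => simpa using h.eq_of_nhds
  | succ n ih => rw [iteratedDeriv_succ', iteratedDeriv_succ']; exact ih h.deriv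

variable {U : Set ℝ} {ε₀ : ℝ}

theorem one_le_inf : (1 : WithTop ℕ∞) ≤ ∞ := by exact_mod_cast (le_top : (1:ℕ∞) ≤ ⊤)

theorem diffAt (hU : IsOpen U) {f : ℝ → ℝ} (hf : ContDiffOn ℝ ∞ f U) {x : ℝ} (hx : x ∈ U) :
    DifferentiableAt ℝ f x :=
  (hf.contDiffAt (hU.mem_nhds hx)).differentiableAt (by simp)

theorem smoothD (hU : IsOpen U) {f : ℝ → ℝ} (hf : ContDiffOn ℝ ∞ f U) :
    ContDiffOn ℝ ∞ (deriv f) U :=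
  hf.deriv_of_isOpen hU (le_of_eq (show ∞ + 1 = ∞ from rfl))

theorem iter_add (hU : IsOpen U) (hε₀ : ε₀ ∈ U) {f g : ℝ → ℝ}
    (hf : ContDiffOn ℝ ∞ f U) (hg : ContDiffOn ℝ ∞ g U) :
    ∀ n, iteratedDeriv n (fun x => f x + g x) ε₀ =
      iteratedDeriv n f ε₀ + iteratedDeriv n g ε₀ := by
  intro n
  induction n generalizing f g with
  | zero => simp [iteratedDeriv_zero]
  | succ n ih =>
    rw [iteratedDeriv_succ', iteratedDeriv_succ', iteratedDeriv_succ']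
    have hev : deriv (fun x => f x + g x) =ᶠ[nhds ε₀] fun x => deriv f x + deriv g x := by
      filter_upwards [hU.mem_nhds hε₀] with x hx
      exact deriv_add (diffAt hU hf hx) (diffAt hU hg hx)
    rw [iter_congr hev]
    exact ih (smoothD hU hf) (smoothD hU hg)

theorem iter_sub (hU : IsOpen U) (hε₀ : ε₀ ∈ U) {f g : ℝ → ℝ}
    (hf : ContDiffOn ℝ ∞ f U) (hg : ContDiffOn ℝ ∞ g U) :
    ∀ n, iteratedDeriv n (fun x => f x - g x) ε₀ =
      iteratedDeriv n f ε₀ - iteratedDeriv n g ε₀ := by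
  intro n
  induction n generalizing f g with
  | zero => simp [iteratedDeriv_zero]
  | succ n ih =>
    rw [iteratedDeriv_succ', iteratedDeriv_succ', iteratedDeriv_succ']
    have hev : deriv (fun x => f x - g x) =ᶠ[nhds ε₀] fun x => deriv f x - deriv g x := by
      filter_upwards [hU.mem_nhds hε₀] with x hx
      exact deriv_sub (diffAt hU hf hx) (diffAt hU hg hx)
    rw [iter_congr hev]
    exact ih (smoothD hU hf) (smoothD hU hg)

theorem iter_zero_fun : ∀ n, iteratedDeriv n (fun _ : ℝ => (0:ℝ)) ε₀ = 0 := by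
  intro n
  induction n with
  | zero => simp [iteratedDeriv_zero]
  | succ n ih => rw [iteratedDeriv_succ']; simpa using ih

theorem iter_sum (hU : IsOpen U) (hε₀ : ε₀ ∈ U) {ι : Type*} [DecidableEq ι] (s : Finset ι)
    (f : ι → ℝ → ℝ) (hf : ∀ i ∈ s, ContDiffOn ℝ ∞ (f i) U) :
    ∀ n, iteratedDeriv n (fun x => ∑ i ∈ s, f i x) ε₀ = ∑ i ∈ s, iteratedDeriv n (f i) ε₀ := by
  intro n
  induction s using Finset.induction with
  | empty => simpa using iter_zero_fun n
  | insert a s hns ih =>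
    have h1 : (fun x => ∑ i ∈ insert a s, f i x) = fun x => f a x + ∑ i ∈ s, f i x := by
      funext x; exact Finset.sum_insert hns
    rw [h1, Finset.sum_insert hns,
      iter_add hU hε₀ (hf a (Finset.mem_insert_self a s))
        (ContDiffOn.sum fun i hi => hf i (Finset.mem_insert_of_mem hi)) n,
      ih fun i hi => hf i (Finset.mem_insert_of_mem hi)]

theorem ord_mul (hU : IsOpen U) (hε₀ : ε₀ ∈ U) :
    ∀ (m : ℕ) {f g : ℝ → ℝ}, ContDiffOn ℝ ∞ f U → ContDiffOn ℝ ∞ g U →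
      Ord ε₀ m f → Ord ε₀ m (fun x => f x * g x) := by
  intro m
  induction m with
  | zero => intro f g _ _ _ j hj; omega
  | succ m ih =>
    intro f g hf hg hOrd j hj
    match j with
    | 0 =>
      have h0 : f ε₀ = 0 := by simpa [iteratedDeriv_zero] using hOrd 0 (Nat.succ_pos m)
      simp [iteratedDeriv_zero, h0]
    | j + 1 =>
      rw [iteratedDeriv_succ']
      have hev : deriv (fun x => f x * g x) =ᶠ[nhds ε₀]
          fun x => deriv f x * g x + f x * deriv g x := by
        filter_upwards [hU.mem_nhds hε₀] with x hx
        exact deriv_mul (diffAt hU hf hx) (diffAt hU hg hx)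
      rw [iter_congr hev, iter_add hU hε₀ ((smoothD hU hf).mul hg) (hf.mul (smoothD hU hg))]
      have h1 : Ord ε₀ m (deriv f) := by
        intro i hi
        rw [← iteratedDeriv_succ']
        exact hOrd (i+1) (by omega)
      have h2 : Ord ε₀ m f := fun i hi => hOrd i (by omega)
      rw [ih (smoothD hU hf) hg h1 j (by omega), ih hf (smoothD hU hg) h2 j (by omega), add_zero]

theorem ord_mul_vanish (hU : IsOpen U) (hε₀ : ε₀ ∈ U) {g : ℝ → ℝ} (hg : ContDiffOn ℝ ∞ g U)
    (hg0 : g ε₀ = 0) :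
    ∀ (m : ℕ) {f : ℝ → ℝ}, ContDiffOn ℝ ∞ f U →
      Ord ε₀ m f → Ord ε₀ (m+1) (fun x => f x * g x) := by
  intro m
  induction m with
  | zero =>
    intro f hf _ j hj
    interval_cases j
    simp [iteratedDeriv_zero, hg0]
  | succ m ih =>
    intro f hf hOrd j hj
    match j with
    | 0 => simp [iteratedDeriv_zero, hg0]
    | j + 1 =>
      rw [iteratedDeriv_succ']
      have hev : deriv (fun x => f x * g x) =ᶠ[nhds ε₀]
          fun x => deriv f x * g x + f x * deriv g x := by
        filter_upwards [hU.mem_nhds hε₀] with x hx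
        exact deriv_mul (diffAt hU hf hx) (diffAt hU hg hx)
      rw [iter_congr hev, iter_add hU hε₀ ((smoothD hU hf).mul hg) (hf.mul (smoothD hU hg))]
      have h1 : Ord ε₀ m (deriv f) := by
        intro i hi
        rw [← iteratedDeriv_succ']
        exact hOrd (i+1) (by omega)
      rw [ih (smoothD hU hf) h1 j (by omega),
        ord_mul hU hε₀ (m+1) hf (smoothD hU hg) hOrd j (by omega), add_zero]

theorem ord_mono {m m' : ℕ} (h : m' ≤ m) {f : ℝ → ℝ} (hf : Ord ε₀ m f) : Ord ε₀ m' f :=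
  fun j hj => hf j (lt_of_lt_of_le hj h)

/-! ### Word-product machinery -/

variable {B A : ℕ}

/-- iterated vecMul along a word -/
def vecW (Φ : Fin B → Fin A) (Δ : ℝ → Matrix (Fin B) (Fin B) ℝ) (v : ℝ → Fin B → ℝ)
    (u : List (Fin A)) (ε : ℝ) : Fin B → ℝ :=
  Matrix.vecMul (v ε) ((u.map (deltaSub (Δ ε) Φ)).prod)

theorem vecW_nil (Φ : Fin B → Fin A) (Δ : ℝ → Matrix (Fin B) (Fin B) ℝ) (v : ℝ → Fin B → ℝ)
    (ε : ℝ) : vecW Φ Δ v [] ε = v ε := by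
  simp [vecW]

theorem vecW_append (Φ : Fin B → Fin A) (Δ : ℝ → Matrix (Fin B) (Fin B) ℝ) (v : ℝ → Fin B → ℝ)
    (u : List (Fin A)) (b : Fin A) (ε : ℝ) :
    vecW Φ Δ v (u ++ [b]) ε = Matrix.vecMul (vecW Φ Δ v u ε) (deltaSub (Δ ε) Φ b) := by
  simp [vecW, Matrix.vecMul_vecMul]

theorem vecW_cons (Φ : Fin B → Fin A) (Δ : ℝ → Matrix (Fin B) (Fin B) ℝ) (v : ℝ → Fin B → ℝ)
    (u : List (Fin A)) (b : Fin A) (ε : ℝ) :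
    vecW Φ Δ v (b :: u) ε
      = vecW Φ Δ (fun ε' => Matrix.vecMul (v ε') (deltaSub (Δ ε') Φ b)) u ε := by
  simp [vecW, Matrix.vecMul_vecMul]

theorem vecW_apply (Φ : Fin B → Fin A) (Δ : ℝ → Matrix (Fin B) (Fin B) ℝ) (v : ℝ → Fin B → ℝ)
    (u : List (Fin A)) (b : Fin A) (ε : ℝ) (i : Fin B) :
    vecW Φ Δ v (u ++ [b]) ε i = ∑ j, vecW Φ Δ v u ε j * deltaSub (Δ ε) Φ b j i := by
  rw [vecW_append]
  simp [Matrix.vecMul, dotProduct]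

theorem wordProb_eq (Φ : Fin B → Fin A) (Δ : ℝ → Matrix (Fin B) (Fin B) ℝ)
    (π : ℝ → Fin B → ℝ) (L : List (Fin A)) (ε : ℝ) :
    wordProb (π ε) (Δ ε) Φ L = ∑ i, vecW Φ Δ π L ε i := by
  simp [wordProb, vecW, dotProduct]

theorem deltaSub_smooth {Δ : ℝ → Matrix (Fin B) (Fin B) ℝ} {Φ : Fin B → Fin A}
    (hΔ : ∀ i j, ContDiffOn ℝ ∞ (fun ε => Δ ε i j) U) (b : Fin A) (i j : Fin B) :
    ContDiffOn ℝ ∞ (fun ε => deltaSub (Δ ε) Φ b i j) U := by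
  by_cases h : Φ j = b <;> simp [deltaSub, h] <;> first | exact hΔ i j | exact contDiffOn_const

theorem vecW_smooth {Δ : ℝ → Matrix (Fin B) (Fin B) ℝ} {Φ : Fin B → Fin A}
    (hΔ : ∀ i j, ContDiffOn ℝ ∞ (fun ε => Δ ε i j) U)
    {v : ℝ → Fin B → ℝ} (hv : ∀ i, ContDiffOn ℝ ∞ (fun ε => v ε i) U)
    (u : List (Fin A)) : ∀ i : Fin B, ContDiffOn ℝ ∞ (fun ε => vecW Φ Δ v u ε i) U := by
  induction u using List.reverseRecOn with
  | nil => intro i; simpa [vecW_nil] using hv i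
  | append_singleton u b ih =>
    intro i
    have h1 : (fun ε => vecW Φ Δ v (u ++ [b]) ε i)
        = fun ε => ∑ j, vecW Φ Δ v u ε j * deltaSub (Δ ε) Φ b j i := by
      funext ε; exact vecW_apply Φ Δ v u b ε i
    rw [h1]
    exact ContDiffOn.sum fun j _ => (ih j).mul (deltaSub_smooth hΔ b j i)

/-- rank-one matrices have vanishing 2×2 minors -/
theorem minors_of_rank_one {M : Matrix (Fin B) (Fin B) ℝ} (h : M.rank = 1) :
    ∀ i l j j', M i j * M l j' = M i j' * M l j := by
  have h1 : Module.finrank ℝ (LinearMap.range M.mulVecLin) ≤ 1 := le_of_eq h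
  obtain ⟨v₀, hv₀⟩ := finrank_le_one_iff.mp h1
  have hcol : ∀ j : Fin B, ∃ c : ℝ, ∀ i, M i j = c * v₀.val i := by
    intro j
    have hmem : (fun i => M i j) ∈ LinearMap.range M.mulVecLin := by
      refine ⟨Pi.single j 1, ?_⟩
      simp [Matrix.mulVecLin_apply]; rfl
    obtain ⟨c, hc⟩ := hv₀ ⟨fun i => M i j, hmem⟩
    refine ⟨c, fun i => ?_⟩
    have := congrArg (fun x => x.val i) hc
    simpa using this.symm
  intro i l j j'
  obtain ⟨c, hc⟩ := hcol j
  obtain ⟨c', hc'⟩ := hcol j'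
  rw [hc i, hc' l, hc' i, hc l]; ring

theorem key_identity {B : ℕ} (p q c d : Fin B → ℝ) :
    (∑ i, p i * c i) * (∑ l, q l * d l) - (∑ i, p i * d i) * (∑ l, q l * c l)
      = ∑ i, ∑ l, ((p i * q l - p l * q i) * ((c i * d l - d i * c l) / 2)) := by
  have hswap : ∑ i : Fin B, ∑ l : Fin B, (p l * q i * (c l * d i - d l * c i)) / 2
      = ∑ i : Fin B, ∑ l : Fin B, (p i * q l * (c i * d l - d i * c l)) / 2 :=
    Finset.sum_comm
  have h2 : ∑ i : Fin B, ∑ l : Fin B,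
        ((p i * q l - p l * q i) * ((c i * d l - d i * c l) / 2))
      = (∑ i : Fin B, ∑ l : Fin B, (p i * q l * (c i * d l - d i * c l)) / 2)
        + (∑ i : Fin B, ∑ l : Fin B, (p l * q i * (c l * d i - d l * c i)) / 2) := by
    rw [← Finset.sum_add_distrib]
    refine Finset.sum_congr rfl fun i _ => ?_
    rw [← Finset.sum_add_distrib]
    exact Finset.sum_congr rfl fun l _ => by ring
  rw [h2, hswap, ← Finset.sum_add_distrib]
  have h3 : ∀ i : Fin B, ∑ l : Fin B, (p i * q l * (c i * d l - d i * c l)) / 2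
        + ∑ l : Fin B, (p i * q l * (c i * d l - d i * c l)) / 2
      = ∑ l : Fin B, p i * q l * (c i * d l - d i * c l) := by
    intro i
    rw [← Finset.sum_add_distrib]
    exact Finset.sum_congr rfl fun l _ => by ring
  calc (∑ i, p i * c i) * (∑ l, q l * d l) - (∑ i, p i * d i) * (∑ l, q l * c l)
      = ∑ i : Fin B, ∑ l : Fin B, p i * q l * (c i * d l - d i * c l) := by
        rw [Finset.sum_mul_sum, Finset.sum_mul_sum, ← Finset.sum_sub_distrib]
        refine Finset.sum_congr rfl fun i _ => ?_
        rw [← Finset.sum_sub_distrib]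
        exact Finset.sum_congr rfl fun l _ => by ring
    _ = ∑ i : Fin B, (∑ l : Fin B, (p i * q l * (c i * d l - d i * c l)) / 2
          + ∑ l : Fin B, (p i * q l * (c i * d l - d i * c l)) / 2) :=
        Finset.sum_congr rfl fun i _ => (h3 i).symm

/-! ### The cross-determinant vanishing lemma -/

theorem C_ord (hU : IsOpen U) (hε₀ : ε₀ ∈ U) {Φ : Fin B → Fin A}
    {Δ : ℝ → Matrix (Fin B) (Fin B) ℝ}
    (hΔ : ∀ i j, ContDiffOn ℝ ∞ (fun ε => Δ ε i j) U)
    (hbh : ∀ (b : Fin A) (i l j j' : Fin B),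
      deltaSub (Δ ε₀) Φ b i j * deltaSub (Δ ε₀) Φ b l j'
        = deltaSub (Δ ε₀) Φ b i j' * deltaSub (Δ ε₀) Φ b l j)
    {v w : ℝ → Fin B → ℝ} (hv : ∀ i, ContDiffOn ℝ ∞ (fun ε => v ε i) U)
    (hw : ∀ i, ContDiffOn ℝ ∞ (fun ε => w ε i) U) (u : List (Fin A)) :
    ∀ i l : Fin B, Ord ε₀ u.length
      (fun ε => vecW Φ Δ v u ε i * vecW Φ Δ w u ε l
        - vecW Φ Δ v u ε l * vecW Φ Δ w u ε i) := by
  induction u using List.reverseRecOn with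
  | nil => intro i l j hj; simp at hj
  | append_singleton u b ih =>
    intro J J' j hj
    have hfun : (fun ε => vecW Φ Δ v (u ++ [b]) ε J * vecW Φ Δ w (u ++ [b]) ε J'
          - vecW Φ Δ v (u ++ [b]) ε J' * vecW Φ Δ w (u ++ [b]) ε J)
        = fun ε => ∑ i, ∑ l,
            ((vecW Φ Δ v u ε i * vecW Φ Δ w u ε l - vecW Φ Δ v u ε l * vecW Φ Δ w u ε i) *
              ((deltaSub (Δ ε) Φ b i J * deltaSub (Δ ε) Φ b l J'
                - deltaSub (Δ ε) Φ b i J' * deltaSub (Δ ε) Φ b l J) / 2)) := by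
      funext ε
      rw [vecW_apply, vecW_apply, vecW_apply, vecW_apply]
      exact key_identity (vecW Φ Δ v u ε) (vecW Φ Δ w u ε)
        (fun i => deltaSub (Δ ε) Φ b i J) (fun i => deltaSub (Δ ε) Φ b i J')
    have hCsm : ∀ i l : Fin B, ContDiffOn ℝ ∞
        (fun ε => vecW Φ Δ v u ε i * vecW Φ Δ w u ε l
          - vecW Φ Δ v u ε l * vecW Φ Δ w u ε i) U := fun i l =>
      ((vecW_smooth hΔ hv u i).mul (vecW_smooth hΔ hw u l)).sub
        ((vecW_smooth hΔ hv u l).mul (vecW_smooth hΔ hw u i))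
    have hMsm : ∀ i l : Fin B, ContDiffOn ℝ ∞
        (fun ε => (deltaSub (Δ ε) Φ b i J * deltaSub (Δ ε) Φ b l J'
          - deltaSub (Δ ε) Φ b i J' * deltaSub (Δ ε) Φ b l J) / 2) U := fun i l =>
      (((deltaSub_smooth hΔ b i J).mul (deltaSub_smooth hΔ b l J')).sub
        ((deltaSub_smooth hΔ b i J').mul (deltaSub_smooth hΔ b l J))).div_const 2
    have hterm : ∀ i l : Fin B, ContDiffOn ℝ ∞ (fun ε =>
        (vecW Φ Δ v u ε i * vecW Φ Δ w u ε l - vecW Φ Δ v u ε l * vecW Φ Δ w u ε i) *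
        ((deltaSub (Δ ε) Φ b i J * deltaSub (Δ ε) Φ b l J'
          - deltaSub (Δ ε) Φ b i J' * deltaSub (Δ ε) Φ b l J) / 2)) U :=
      fun i l => (hCsm i l).mul (hMsm i l)
    have hlen : j < u.length + 1 := by simpa using hj
    rw [hfun, iter_sum hU hε₀ Finset.univ _
      (fun i _ => ContDiffOn.sum fun l _ => hterm i l) j]
    refine Finset.sum_eq_zero fun i _ => ?_
    rw [iter_sum hU hε₀ Finset.univ _ (fun l _ => hterm i l) j]
    refine Finset.sum_eq_zero fun l _ => ?_
    exact ord_mul_vanish hU hε₀ (hMsm i l)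
      (by rw [hbh b i l J J']; ring) u.length (hCsm i l) (ih i l) j hlen

/-! ### The core stabilization lemma -/

theorem core {N : ℕ} (hU : IsOpen U) (hε₀ : ε₀ ∈ U) {Φ : Fin B → Fin A}
    {Δ : ℝ → Matrix (Fin B) (Fin B) ℝ}
    (hΔ : ∀ i j, ContDiffOn ℝ ∞ (fun ε => Δ ε i j) U)
    (hbh : ∀ (b : Fin A) (i l j j' : Fin B),
      deltaSub (Δ ε₀) Φ b i j * deltaSub (Δ ε₀) Φ b l j'
        = deltaSub (Δ ε₀) Φ b i j' * deltaSub (Δ ε₀) Φ b l j)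
    {v w : ℝ → Fin B → ℝ} (hv : ∀ i, ContDiffOn ℝ ∞ (fun ε => v ε i) U)
    (hw : ∀ i, ContDiffOn ℝ ∞ (fun ε => w ε i) U)
    (u : List (Fin A)) (a : Fin A) (hlen : N + 1 ≤ u.length)
    (hvne : ∀ ε ∈ U, (∑ i, vecW Φ Δ v u ε i) ≠ 0)
    (hwne : ∀ ε ∈ U, (∑ i, vecW Φ Δ w u ε i) ≠ 0) :
    iteratedDeriv N (fun ε => (∑ i, vecW Φ Δ v (u ++ [a]) ε i)
        / (∑ i, vecW Φ Δ v u ε i)) ε₀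
      = iteratedDeriv N (fun ε => (∑ i, vecW Φ Δ w (u ++ [a]) ε i)
        / (∑ i, vecW Φ Δ w u ε i)) ε₀ := by
  have hsum_append : ∀ (x : ℝ → Fin B → ℝ) (ε : ℝ),
      (∑ i, vecW Φ Δ x (u ++ [a]) ε i)
        = ∑ i, vecW Φ Δ x u ε i * (∑ j, deltaSub (Δ ε) Φ a i j) := by
    intro x ε
    calc (∑ i, vecW Φ Δ x (u ++ [a]) ε i)
        = ∑ J, ∑ i, vecW Φ Δ x u ε i * deltaSub (Δ ε) Φ a i J :=
          Finset.sum_congr rfl fun J _ => vecW_apply Φ Δ x u a ε J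
      _ = ∑ i, ∑ J, vecW Φ Δ x u ε i * deltaSub (Δ ε) Φ a i J := Finset.sum_comm
      _ = ∑ i, vecW Φ Δ x u ε i * (∑ j, deltaSub (Δ ε) Φ a i j) :=
          Finset.sum_congr rfl fun i _ => (Finset.mul_sum _ _ _).symm
  have hnum : ∀ ε, (∑ i, vecW Φ Δ v (u ++ [a]) ε i) * (∑ i, vecW Φ Δ w u ε i)
      - (∑ i, vecW Φ Δ w (u ++ [a]) ε i) * (∑ i, vecW Φ Δ v u ε i)
      = ∑ i, ∑ l, ((vecW Φ Δ v u ε i * vecW Φ Δ w u ε l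
            - vecW Φ Δ v u ε l * vecW Φ Δ w u ε i) *
          (((∑ j, deltaSub (Δ ε) Φ a i j) * 1 - 1 * (∑ j, deltaSub (Δ ε) Φ a l j)) / 2)) := by
    intro ε
    rw [hsum_append v ε, hsum_append w ε]
    have hk := key_identity (vecW Φ Δ v u ε) (vecW Φ Δ w u ε)
      (fun i => ∑ j, deltaSub (Δ ε) Φ a i j) (fun _ => (1:ℝ))
    simp only [mul_one] at hk ⊢
    linear_combination hk
  have hrsm : ∀ i, ContDiffOn ℝ ∞ (fun ε => ∑ j, deltaSub (Δ ε) Φ a i j) U := fun i =>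
    ContDiffOn.sum fun j _ => deltaSub_smooth hΔ a i j
  have hCsm : ∀ i l : Fin B, ContDiffOn ℝ ∞
      (fun ε => vecW Φ Δ v u ε i * vecW Φ Δ w u ε l
        - vecW Φ Δ v u ε l * vecW Φ Δ w u ε i) U := fun i l =>
    ((vecW_smooth hΔ hv u i).mul (vecW_smooth hΔ hw u l)).sub
      ((vecW_smooth hΔ hv u l).mul (vecW_smooth hΔ hw u i))
  have hRsm : ∀ i l : Fin B, ContDiffOn ℝ ∞
      (fun ε => ((∑ j, deltaSub (Δ ε) Φ a i j) * 1 - 1 * (∑ j, deltaSub (Δ ε) Φ a l j)) / 2)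
        U := fun i l =>
    (((hrsm i).mul contDiffOn_const).sub (contDiffOn_const.mul (hrsm l))).div_const 2
  have htermsm : ∀ i l : Fin B, ContDiffOn ℝ ∞ (fun ε =>
      (vecW Φ Δ v u ε i * vecW Φ Δ w u ε l - vecW Φ Δ v u ε l * vecW Φ Δ w u ε i) *
      (((∑ j, deltaSub (Δ ε) Φ a i j) * 1 - 1 * (∑ j, deltaSub (Δ ε) Φ a l j)) / 2)) U :=
    fun i l => (hCsm i l).mul (hRsm i l)
  have hnumOrd : Ord ε₀ (N+1) (fun ε =>
      (∑ i, vecW Φ Δ v (u ++ [a]) ε i) * (∑ i, vecW Φ Δ w u ε i)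
        - (∑ i, vecW Φ Δ w (u ++ [a]) ε i) * (∑ i, vecW Φ Δ v u ε i)) := by
    intro j hj
    have hfun2 : (fun ε =>
        (∑ i, vecW Φ Δ v (u ++ [a]) ε i) * (∑ i, vecW Φ Δ w u ε i)
          - (∑ i, vecW Φ Δ w (u ++ [a]) ε i) * (∑ i, vecW Φ Δ v u ε i))
        = fun ε => ∑ i, ∑ l, ((vecW Φ Δ v u ε i * vecW Φ Δ w u ε l
            - vecW Φ Δ v u ε l * vecW Φ Δ w u ε i) *
          (((∑ j', deltaSub (Δ ε) Φ a i j') * 1 - 1 * (∑ j', deltaSub (Δ ε) Φ a l j')) / 2)) :=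
      funext hnum
    rw [hfun2, iter_sum hU hε₀ Finset.univ _
      (fun i _ => ContDiffOn.sum fun l _ => htermsm i l) j]
    refine Finset.sum_eq_zero fun i _ => ?_
    rw [iter_sum hU hε₀ Finset.univ _ (fun l _ => htermsm i l) j]
    refine Finset.sum_eq_zero fun l _ => ?_
    exact ord_mul hU hε₀ (N+1) (hCsm i l) (hRsm i l)
      (ord_mono hlen (C_ord hU hε₀ hΔ hbh hv hw u i l)) j hj
  have hSvsm : ∀ (x : ℝ → Fin B → ℝ), (∀ i, ContDiffOn ℝ ∞ (fun ε => x ε i) U) →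
      ∀ (L : List (Fin A)), ContDiffOn ℝ ∞ (fun ε => ∑ i, vecW Φ Δ x L ε i) U :=
    fun x hx L => ContDiffOn.sum fun i _ => vecW_smooth hΔ hx L i
  have hnumsm : ContDiffOn ℝ ∞ (fun ε =>
      (∑ i, vecW Φ Δ v (u ++ [a]) ε i) * (∑ i, vecW Φ Δ w u ε i)
        - (∑ i, vecW Φ Δ w (u ++ [a]) ε i) * (∑ i, vecW Φ Δ v u ε i)) U :=
    ((hSvsm v hv _).mul (hSvsm w hw _)).sub ((hSvsm w hw _).mul (hSvsm v hv _))
  have hinvsm : ContDiffOn ℝ ∞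
      (fun ε => ((∑ i, vecW Φ Δ v u ε i) * (∑ i, vecW Φ Δ w u ε i))⁻¹) U :=
    ((hSvsm v hv u).mul (hSvsm w hw u)).inv fun ε hε => mul_ne_zero (hvne ε hε) (hwne ε hε)
  have hFv : ContDiffOn ℝ ∞ (fun ε =>
      (∑ i, vecW Φ Δ v (u ++ [a]) ε i) / (∑ i, vecW Φ Δ v u ε i)) U :=
    (hSvsm v hv _).div (hSvsm v hv u) hvne
  have hFw : ContDiffOn ℝ ∞ (fun ε =>
      (∑ i, vecW Φ Δ w (u ++ [a]) ε i) / (∑ i, vecW Φ Δ w u ε i)) U :=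
    (hSvsm w hw _).div (hSvsm w hw u) hwne
  have hev : (fun ε => (∑ i, vecW Φ Δ v (u ++ [a]) ε i) / (∑ i, vecW Φ Δ v u ε i)
        - (∑ i, vecW Φ Δ w (u ++ [a]) ε i) / (∑ i, vecW Φ Δ w u ε i))
      =ᶠ[nhds ε₀] fun ε =>
        ((∑ i, vecW Φ Δ v (u ++ [a]) ε i) * (∑ i, vecW Φ Δ w u ε i)
          - (∑ i, vecW Φ Δ w (u ++ [a]) ε i) * (∑ i, vecW Φ Δ v u ε i))
        * ((∑ i, vecW Φ Δ v u ε i) * (∑ i, vecW Φ Δ w u ε i))⁻¹ := by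
    filter_upwards [hU.mem_nhds hε₀] with ε hε
    have h1 := hvne ε hε
    have h2 := hwne ε hε
    field_simp
  have h0 : iteratedDeriv N (fun ε =>
      (∑ i, vecW Φ Δ v (u ++ [a]) ε i) / (∑ i, vecW Φ Δ v u ε i)
        - (∑ i, vecW Φ Δ w (u ++ [a]) ε i) / (∑ i, vecW Φ Δ w u ε i)) ε₀ = 0 := by
    rw [iter_congr hev N]
    exact ord_mul hU hε₀ (N+1) hnumsm hinvsm hnumOrd N (by omega)
  have h1 := iter_sub hU hε₀ hFv hFw N
  rw [h1] at h0
  linarith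

end BHAux

namespace BHAux

theorem iter_ratio_congr {B A : ℕ} (Φ : Fin B → Fin A) (Δ : ℝ → Matrix (Fin B) (Fin B) ℝ)
    (π : ℝ → Fin B → ℝ) (ε₀ : ℝ) (N : ℕ) {n : ℕ} (f g : Fin n → Fin A) (h : f = g) :
    iteratedDeriv N (fun ε => wordProb (π ε) (Δ ε) Φ (List.ofFn f)
        / wordProb (π ε) (Δ ε) Φ (List.ofFn f).dropLast) ε₀
      = iteratedDeriv N (fun ε => wordProb (π ε) (Δ ε) Φ (List.ofFn g)
        / wordProb (π ε) (Δ ε) Φ (List.ofFn g).dropLast) ε₀ := by rw [h]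

end BHAux


open BHAux in
set_option maxHeartbeats 1000000 in
/-- Stabilization of the derivatives of conditional probabilities at a Black Hole:
for `k ≥ N + 1`,
`(d^N/dε^N)[p(z_{-k}⋯z_0)/p(z_{-k}⋯z_{-1})]|_{ε₀} =
 (d^N/dε^N)[p(z_{-N-1}⋯z_0)/p(z_{-N-1}⋯z_{-1})]|_{ε₀}`. -/
theorem blackHole_conditional_derivative_stabilizes {B A : ℕ} (hB : 1 ≤ B) (hA : 1 ≤ A)
    (Φ : Fin B → Fin A)
    (Δ : ℝ → Matrix (Fin B) (Fin B) ℝ) (π : ℝ → Fin B → ℝ)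
    (U : Set ℝ) (hU : IsOpen U) (ε₀ : ℝ) (hε₀ : ε₀ ∈ U)
    (hΔsmooth : ∀ i j, ContDiffOn ℝ (⊤ : ℕ∞) (fun ε => Δ ε i j) U)
    (hπsmooth : ∀ i, ContDiffOn ℝ (⊤ : ℕ∞) (fun ε => π ε i) U)
    (hΔnonneg : ∀ ε ∈ U, ∀ i j, 0 ≤ Δ ε i j) (hΔrowsum : ∀ ε ∈ U, ∀ i, ∑ j, Δ ε i j = 1)
    (hπnonneg : ∀ ε ∈ U, ∀ i, 0 ≤ π ε i) (hπsum : ∀ ε ∈ U, ∑ i, π ε i = 1)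
    (hπstat : ∀ ε ∈ U, Matrix.vecMul (π ε) (Δ ε) = π ε)
    (hpos : ∀ ε ∈ U, ∀ w : List (Fin A), w ≠ [] → 0 < wordProb (π ε) (Δ ε) Φ w)
    (hblackhole : IsBlackHole (Δ ε₀) Φ) :
    ∀ N : ℕ, ∀ k : ℕ, ∀ hk : N + 1 ≤ k, ∀ z : Fin (k + 1) → Fin A,
      iteratedDeriv N (fun ε =>
          wordProb (π ε) (Δ ε) Φ (List.ofFn z) /
            wordProb (π ε) (Δ ε) Φ (List.ofFn z).dropLast) ε₀ =
        iteratedDeriv N (fun ε =>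
          wordProb (π ε) (Δ ε) Φ
              (List.ofFn fun j : Fin (N + 2) => z ⟨k - (N + 1) + j.val, by
                have := j.isLt; omega⟩) /
            wordProb (π ε) (Δ ε) Φ
              (List.ofFn fun j : Fin (N + 2) =>
                z ⟨k - (N + 1) + j.val, by have := j.isLt; omega⟩).dropLast) ε₀ := by
  intro N k hk
  have hΔ' : ∀ i j, ContDiffOn ℝ ∞ (fun ε => Δ ε i j) U := fun i j =>
    (hΔsmooth i j).of_le (by simp)
  have hπ' : ∀ i, ContDiffOn ℝ ∞ (fun ε => π ε i) U := fun i => (hπsmooth i).of_le (by simp)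
  have hbh' : ∀ (b : Fin A) (i l j j' : Fin B),
      deltaSub (Δ ε₀) Φ b i j * deltaSub (Δ ε₀) Φ b l j'
        = deltaSub (Δ ε₀) Φ b i j' * deltaSub (Δ ε₀) Φ b l j := fun b =>
    minors_of_rank_one (hblackhole b).1
  induction k, hk using Nat.le_induction with
  | base =>
    intro z
    exact iter_ratio_congr Φ Δ π ε₀ N z _
      (funext fun j => congrArg z (Fin.ext (by simp)))
  | succ k hk ih =>
    intro z
    set z' : Fin (k + 1) → Fin A := fun j => z j.succ with hz'
    have hne : List.ofFn z' ≠ [] := by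
      have hlen : (List.ofFn z').length = k + 1 := List.length_ofFn
      intro h; rw [h] at hlen; simp at hlen
    set Lz : List (Fin A) := List.ofFn z' with hLz
    set u : List (Fin A) := Lz.dropLast with hu
    set al : Fin A := Lz.getLast hne with hal
    have f4 : u ++ [al] = Lz := List.dropLast_append_getLast hne
    have hulen : u.length = k := by rw [hu, hLz]; simp
    have hune : u ≠ [] := by
      intro h; rw [h] at hulen; simp at hulen; omega
    set wsh : ℝ → Fin B → ℝ := fun ε => Matrix.vecMul (π ε) (deltaSub (Δ ε) Φ (z 0))
      with hwsh
    have hwshsm : ∀ i, ContDiffOn ℝ ∞ (fun ε => wsh ε i) U := by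
      intro i
      have h1 : (fun ε => wsh ε i) = fun ε => ∑ j, π ε j * deltaSub (Δ ε) Φ (z 0) j i := by
        funext ε; simp [hwsh, Matrix.vecMul, dotProduct]
      rw [h1]
      exact ContDiffOn.sum fun j _ => (hπ' j).mul (deltaSub_smooth hΔ' (z 0) j i)
    have hcons : ∀ (M : List (Fin A)) (ε : ℝ),
        wordProb (π ε) (Δ ε) Φ ((z 0) :: M) = ∑ i, vecW Φ Δ wsh M ε i := by
      intro M ε
      rw [wordProb_eq]
      exact Finset.sum_congr rfl fun i _ => congrFun (vecW_cons Φ Δ π M (z 0) ε) i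
    have hvne : ∀ ε ∈ U, (∑ i, vecW Φ Δ π u ε i) ≠ 0 := by
      intro ε hε
      rw [← wordProb_eq]
      exact (hpos ε hε u hune).ne'
    have hwne : ∀ ε ∈ U, (∑ i, vecW Φ Δ wsh u ε i) ≠ 0 := by
      intro ε hε
      rw [← hcons u ε]
      exact (hpos ε hε _ (List.cons_ne_nil _ _)).ne'
    have step1fun : (fun ε => wordProb (π ε) (Δ ε) Φ (List.ofFn z)
          / wordProb (π ε) (Δ ε) Φ (List.ofFn z).dropLast)
        = fun ε => (∑ i, vecW Φ Δ wsh (u ++ [al]) ε i) / (∑ i, vecW Φ Δ wsh u ε i) := by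
      funext ε
      have e1 : List.ofFn z = z 0 :: Lz := List.ofFn_succ
      have e2 : (List.ofFn z).dropLast = z 0 :: u := by
        rw [e1, List.dropLast_cons_of_ne_nil hne]
      rw [e2, e1, hcons Lz ε, hcons u ε, f4]
    have step2fun : (fun ε => (∑ i, vecW Φ Δ π (u ++ [al]) ε i) / (∑ i, vecW Φ Δ π u ε i))
        = fun ε => wordProb (π ε) (Δ ε) Φ Lz / wordProb (π ε) (Δ ε) Φ Lz.dropLast := by
      funext ε
      rw [wordProb_eq, wordProb_eq, ← f4, List.dropLast_concat]
    have s1 : iteratedDeriv N (fun ε => wordProb (π ε) (Δ ε) Φ (List.ofFn z)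
            / wordProb (π ε) (Δ ε) Φ (List.ofFn z).dropLast) ε₀
        = iteratedDeriv N (fun ε => (∑ i, vecW Φ Δ wsh (u ++ [al]) ε i)
            / (∑ i, vecW Φ Δ wsh u ε i)) ε₀ := by rw [step1fun]
    have s2 : iteratedDeriv N (fun ε => (∑ i, vecW Φ Δ wsh (u ++ [al]) ε i)
            / (∑ i, vecW Φ Δ wsh u ε i)) ε₀
        = iteratedDeriv N (fun ε => (∑ i, vecW Φ Δ π (u ++ [al]) ε i)
            / (∑ i, vecW Φ Δ π u ε i)) ε₀ :=
      core hU hε₀ hΔ' hbh' hwshsm hπ' u al (by omega) hwne hvne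
    have s3 : iteratedDeriv N (fun ε => (∑ i, vecW Φ Δ π (u ++ [al]) ε i)
            / (∑ i, vecW Φ Δ π u ε i)) ε₀
        = iteratedDeriv N (fun ε => wordProb (π ε) (Δ ε) Φ Lz
            / wordProb (π ε) (Δ ε) Φ Lz.dropLast) ε₀ := by rw [step2fun]
    have s4 := ih z'
    have s34 : iteratedDeriv N (fun ε => (∑ i, vecW Φ Δ π (u ++ [al]) ε i)
            / (∑ i, vecW Φ Δ π u ε i)) ε₀
        = iteratedDeriv N (fun ε =>
            wordProb (π ε) (Δ ε) Φ
                (List.ofFn fun j : Fin (N + 2) => z' ⟨k - (N + 1) + j.val, by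
                  have := j.isLt; omega⟩) /
              wordProb (π ε) (Δ ε) Φ
                (List.ofFn fun j : Fin (N + 2) =>
                  z' ⟨k - (N + 1) + j.val, by have := j.isLt; omega⟩).dropLast) ε₀ :=
      s3.trans s4
    refine ((s1.trans s2).trans s34).trans
      (iter_ratio_congr Φ Δ π ε₀ N _ _
        (funext fun j => congrArg z (Fin.ext ?_)))
    simp [Fin.val_succ]
    omega
end

section
/- Explicit formula for higher derivatives of the logarithmic derivative (Lemma 2.3): for every n ≥ 0 and every x ∈ U, d^n/dx^n ( y′(x)/y(x) ) = ∑_{m=1}^{n+1} (−1)^{m+1} (1/m) ∑ ( (n+1)!/(a_1!⋯a_m!) ) · y^{(a_1)}(x) y^{(a_2)}(x) ⋯ y^{(a_m)}(x) / y(x)^m, where the inner sum runs over all ordered m-tuples (a_1,…,a_m) of positive integers with a_1+⋯+a_m = n+1. Equivalently, grouping ordered tuples into nonincreasing partitions a_1 ≥ a_2 ≥ ⋯ ≥ a_m ≥ 1 of n+1, the coefficient of y^{(a_1)}⋯y^{(a_m)}/y^m is C_{[a_1,…,a_m]} = (−1)^{m+1}(1/m) P(a_1,…,a_m) (a_1+⋯+a_m)!/(a_1!⋯a_m!),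 with P(a_1,…,a_m) the number of distinct sequences obtained by permuting the coordinates. -/
/-!
Put `w k = y⁽ᵏ⁾ / y`. The right-hand side is `logCoeff (n + 1) w`, and `w` obeys the Riccati-type
rule `(w k)' = w (k + 1) - w 1 * w k`. Differentiating `logCoeff N w` with this rule, the
`w (k + 1)` terms reindex to compositions of `N + 1` by raising one part (every part except a `1`
arises this way), and the `w 1 * w k` terms reindex by inserting a new part equal to `1`. The
parts equal to `1` so produced cancel between consecutive numbers of parts `m` (the sum
telescopes), leaving `logCoeff (N + 1) w`; induction on `n` finishes the proof.
-/

open Finset Nat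

def compositionTuples (N m : ℕ) : Finset (Fin m → ℕ) :=
  (Fintype.piFinset fun _ : Fin m => range (N + 1)).filter
    (fun a => (∀ i, 1 ≤ a i) ∧ ∑ i, a i = N)

theorem mem_compositionTuples {N m : ℕ} {a : Fin m → ℕ} :
    a ∈ compositionTuples N m ↔ (∀ i, 1 ≤ a i) ∧ ∑ i, a i = N := by
  refine ⟨fun h => (mem_filter.mp h).2, fun h => mem_filter.mpr ⟨?_, h⟩⟩
  refine Fintype.mem_piFinset.mpr fun i => mem_range.mpr ?_
  have := single_le_sum (fun j _ => Nat.zero_le (a j)) (mem_univ i)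
  omega

theorem mem_Icc_of_mem_compositionTuples {N m : ℕ} {a : Fin m → ℕ}
    (ha : a ∈ compositionTuples N m) (i : Fin m) : a i ∈ Icc 1 N := by
  obtain ⟨hpos, hsum⟩ := mem_compositionTuples.mp ha
  exact mem_Icc.mpr ⟨hpos i, hsum ▸ single_le_sum (fun j _ => Nat.zero_le (a j)) (mem_univ i)⟩

theorem eq_one_of_mem_compositionTuples_self {m : ℕ} {c : Fin m → ℕ}
    (hc : c ∈ compositionTuples m m) (i : Fin m) : c i = 1 := by
  obtain ⟨hpos, hsum⟩ := mem_compositionTuples.mp hc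
  by_contra hi
  have : ∑ _j : Fin m, 1 < ∑ j, c j :=
    sum_lt_sum (fun j _ => hpos j) ⟨i, mem_univ i, by have := hpos i; omega⟩
  simp [hsum] at this

theorem sum_update_add_self {ι M : Type*} [Fintype ι] [DecidableEq ι] [AddCommMonoid M]
    (a : ι → M) (i : ι) (k : M) : ∑ j, Function.update a i k j + a i = ∑ j, a j + k := by
  rw [sum_update_of_mem (mem_univ i), ← add_sum_erase _ _ (mem_univ i), sdiff_singleton_eq_erase]
  abel

theorem prod_comp_update {ι α β : Type*} [Fintype ι] [DecidableEq ι] [CommMonoid β]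
    (f : α → β) (a : ι → α) (i : ι) (k : α) :
    ∏ j, f (Function.update a i k j) = f k * ∏ j ∈ univ.erase i, f (a j) := by
  rw [← mul_prod_erase _ _ (mem_univ i), Function.update_self]
  exact congrArg _ (prod_congr rfl fun j hj => by rw [Function.update_of_ne (ne_of_mem_erase hj)])

theorem prod_comp_insertNth {α β : Type*} [CommMonoid β] {m : ℕ} (f : α → β) (a : Fin m → α)
    (j : Fin (m + 1)) (k : α) :
    ∏ i, f (Fin.insertNth (α := fun _ => α) j k a i) = f k * ∏ i, f (a i) := by
  simp [Fin.prod_univ_succAbove _ j]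

theorem sum_card_filter_mul {ι α R : Type*} [Fintype ι] [NonAssocSemiring R]
    (s : Finset (ι → α)) (p : α → Prop) [DecidablePred p] (F : (ι → α) → R) :
    ∑ c ∈ s, (#{i | p (c i)} : R) * F c = ∑ j, ∑ c ∈ s with p (c j), F c := by
  simp only [natCast_card_filter, sum_mul, ite_mul, one_mul, zero_mul, sum_filter]
  exact sum_comm

section Reindex

variable {M : Type*} [AddCommMonoid M] {N m : ℕ}

theorem sum_compositionTuples_update_succ (G : (Fin m → ℕ) → M) (i : Fin m) :
    ∑ a ∈ compositionTuples N m, G (Function.update a i (a i + 1)) =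
      ∑ b ∈ compositionTuples (N + 1) m with b i ≠ 1, G b := by
  refine sum_nbij' (fun a => Function.update a i (a i + 1))
    (fun b => Function.update b i (b i - 1)) (fun a ha => ?_) (fun b hb => ?_)
    (fun a _ => by simp) (fun b hb => ?_) (fun _ _ => rfl)
  · obtain ⟨hpos, hsum⟩ := mem_compositionTuples.mp ha
    have := sum_update_add_self a i (a i + 1)
    refine mem_filter.mpr ⟨mem_compositionTuples.mpr ⟨fun j => ?_, by omega⟩, ?_⟩
    · rcases eq_or_ne j i with rfl | hj
      · simp
      · simpa [hj] using hpos j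
    · have := hpos i
      simp only [Function.update_self]
      omega
  · obtain ⟨hb, hbi⟩ := mem_filter.mp hb
    obtain ⟨hpos, hsum⟩ := mem_compositionTuples.mp hb
    have := sum_update_add_self b i (b i - 1)
    have := hpos i
    refine mem_compositionTuples.mpr ⟨fun j => ?_, by omega⟩
    rcases eq_or_ne j i with rfl | hj
    · simp only [Function.update_self]; omega
    · simpa [hj] using hpos j
  · have := (mem_compositionTuples.mp (mem_filter.mp hb).1).1 i
    have := (mem_filter.mp hb).2
    ext j
    rcases eq_or_ne j i with rfl | hj
    · simp only [Function.update_self]; omega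
    · simp [hj]

theorem sum_compositionTuples_insertNth_one (G : (Fin (m + 1) → ℕ) → M) (j : Fin (m + 1)) :
    ∑ a ∈ compositionTuples N m, G (Fin.insertNth j 1 a) =
      ∑ c ∈ compositionTuples (N + 1) (m + 1) with c j = 1, G c := by
  refine sum_nbij' (fun a => Fin.insertNth j 1 a) (fun c => Fin.removeNth j c)
    (fun a ha => ?_) (fun c hc => ?_) (fun a _ => by simp) (fun c hc => ?_) (fun _ _ => rfl)
  · obtain ⟨hpos, hsum⟩ := mem_compositionTuples.mp ha
    refine mem_filter.mpr ⟨mem_compositionTuples.mpr ⟨?_, ?_⟩, by simp⟩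
    · refine (Fin.forall_iff_succAbove j).mpr ⟨by simp, fun k => by simpa using hpos k⟩
    · rw [Fin.sum_insertNth, hsum, add_comm]
  · obtain ⟨hc, hcj⟩ := mem_filter.mp hc
    obtain ⟨hpos, hsum⟩ := mem_compositionTuples.mp hc
    rw [Fin.sum_univ_succAbove _ j, hcj] at hsum
    exact mem_compositionTuples.mpr ⟨fun k => hpos _, by simp only [Fin.removeNth]; omega⟩
  · simp [← (mem_filter.mp hc).2]

end Reindex

theorem sum_compositionTuples_raisePart (w : ℕ → ℝ) (N m : ℕ) :
    ∑ a ∈ compositionTuples N m, ((N ! : ℝ) / ∏ i, ((a i)! : ℝ)) *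
        ∑ i, (∏ j ∈ univ.erase i, w (a j)) * w (a i + 1) =
      ∑ b ∈ compositionTuples (N + 1) m,
        ((N + 1 : ℝ) - #{i | b i = 1}) * (((N ! : ℝ) / ∏ i, ((b i)! : ℝ)) * ∏ i, w (b i)) := by
  set F : (Fin m → ℕ) → ℝ := fun b => ((N ! : ℝ) / ∏ i, ((b i)! : ℝ)) * ∏ i, w (b i)
  have bump (i : Fin m) (a : Fin m → ℕ) :
      ((N ! : ℝ) / ∏ j, ((a j)! : ℝ)) * ((∏ j ∈ univ.erase i, w (a j)) * w (a i + 1)) =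
        (Function.update a i (a i + 1) i : ℝ) * F (Function.update a i (a i + 1)) := by
    simp only [F, prod_comp_update, prod_comp_update (fun k => (k ! : ℝ)), Function.update_self,
      ← mul_prod_erase univ (fun j => ((a j)! : ℝ)) (mem_univ i), factorial_succ]
    have : ∏ j ∈ univ.erase i, ((a j)! : ℝ) ≠ 0 := prod_ne_zero_iff.mpr fun j _ => by positivity
    push_cast
    field_simp
  have at_index (i : Fin m) :
      ∑ a ∈ compositionTuples N m,
          ((N ! : ℝ) / ∏ j, ((a j)! : ℝ)) * ((∏ j ∈ univ.erase i, w (a j)) * w (a i + 1)) =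
        ∑ b ∈ compositionTuples (N + 1) m, (if b i = 1 then 0 else (b i : ℝ)) * F b := by
    rw [sum_congr rfl fun a _ => bump i a,
      sum_compositionTuples_update_succ (fun b => (b i : ℝ) * F b) i, sum_filter]
    exact sum_congr rfl fun b _ => by split_ifs <;> simp_all
  have weight (b) (hb : b ∈ compositionTuples (N + 1) m) :
      ∑ i, (if b i = 1 then 0 else (b i : ℝ)) = (N + 1 : ℝ) - #{i | b i = 1} := by
    have hsum : ∑ i, (b i : ℝ) = N + 1 := by
      exact_mod_cast (mem_compositionTuples.mp hb).2
    rw [natCast_card_filter, ← hsum, ← sum_sub_distrib]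
    exact sum_congr rfl fun i _ => by split_ifs with h <;> simp [h]
  simp only [mul_sum]
  rw [sum_comm, sum_congr rfl fun i _ => at_index i, sum_comm]
  exact sum_congr rfl fun b hb => by rw [← sum_mul, weight b hb]

theorem sum_compositionTuples_card_eq_one (w : ℕ → ℝ) (N m : ℕ) :
    ∑ c ∈ compositionTuples (N + 1) (m + 1),
        (#{i | c i = 1} : ℝ) * (((N ! : ℝ) / ∏ i, ((c i)! : ℝ)) * ∏ i, w (c i)) =
      (m + 1) * ∑ a ∈ compositionTuples N m,
        ((N ! : ℝ) / ∏ i, ((a i)! : ℝ)) * (w 1 * ∏ i, w (a i)) := by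
  refine (sum_card_filter_mul _ (· = 1) _).trans ?_
  have at_index (j : Fin (m + 1)) :
      ∑ c ∈ compositionTuples (N + 1) (m + 1) with c j = 1,
          ((N ! : ℝ) / ∏ i, ((c i)! : ℝ)) * ∏ i, w (c i) =
        ∑ a ∈ compositionTuples N m, ((N ! : ℝ) / ∏ i, ((a i)! : ℝ)) * (w 1 * ∏ i, w (a i)) := by
    rw [← sum_compositionTuples_insertNth_one
      (fun c => ((N ! : ℝ) / ∏ i, ((c i)! : ℝ)) * ∏ i, w (c i)) j]
    refine sum_congr rfl fun a _ => ?_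
    simp only [prod_comp_insertNth, prod_comp_insertNth (fun k => (k ! : ℝ)), factorial_one,
      cast_one, one_mul]
  rw [sum_congr rfl fun j _ => at_index j, sum_const, Finset.card_fin, nsmul_eq_mul]
  push_cast
  ring

-- `N!` times the coefficient of `t ^ N` in `log (1 + ∑_{k ≥ 1} w k * t ^ k / k!)`, expanded by
-- `log (1 + g) = ∑_{m ≥ 1} (-1) ^ (m + 1) g ^ m / m` and the multinomial theorem.
noncomputable def logCoeff (N : ℕ) (w : ℕ → ℝ) : ℝ :=
  ∑ m ∈ Icc 1 N, (-1 : ℝ) ^ (m + 1) * (1 / (m : ℝ)) *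
    ∑ a ∈ compositionTuples N m, ((N ! : ℝ) / ∏ i, ((a i)! : ℝ)) * ∏ i, w (a i)

theorem logCoeff_one (w : ℕ → ℝ) : logCoeff 1 w = w 1 := by
  have : compositionTuples 1 1 = {fun _ => 1} := by decide
  simp [logCoeff, this]

noncomputable def unitPartSum (N m : ℕ) (w : ℕ → ℝ) : ℝ :=
  ∑ c ∈ compositionTuples (N + 1) m,
    (#{i | c i = 1} : ℝ) * (((N ! : ℝ) / ∏ i, ((c i)! : ℝ)) * ∏ i, w (c i))

theorem unitPartSum_one (w : ℕ → ℝ) {N : ℕ} (hN : 1 ≤ N) : unitPartSum N 1 w = 0 := by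
  refine sum_eq_zero fun c hc => ?_
  have : c 0 ≠ 1 := by
    have := (mem_compositionTuples.mp hc).2
    simp only [Fin.sum_univ_one] at this
    omega
  simp [this]

theorem unitPartSum_self (w : ℕ → ℝ) (N : ℕ) :
    unitPartSum N (N + 1) w = ∑ c ∈ compositionTuples (N + 1) (N + 1),
      (((N + 1)! : ℝ) / ∏ i, ((c i)! : ℝ)) * ∏ i, w (c i) := by
  refine sum_congr rfl fun c hc => ?_
  rw [filter_true_of_mem fun i _ => eq_one_of_mem_compositionTuples_self hc i, Finset.card_fin,
    factorial_succ]
  push_cast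
  ring

theorem sum_compositionTuples_derivation (w : ℕ → ℝ) (N m : ℕ) :
    ∑ a ∈ compositionTuples N m, ((N ! : ℝ) / ∏ i, ((a i)! : ℝ)) *
        ∑ i, (∏ j ∈ univ.erase i, w (a j)) * (w (a i + 1) - w 1 * w (a i)) =
      ∑ b ∈ compositionTuples (N + 1) m, (((N + 1)! : ℝ) / ∏ i, ((b i)! : ℝ)) * ∏ i, w (b i)
        - unitPartSum N m w - m / (m + 1) * unitPartSum N (m + 1) w := by
  have expand (a : Fin m → ℕ) :
      ∑ i, (∏ j ∈ univ.erase i, w (a j)) * (w (a i + 1) - w 1 * w (a i)) =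
        ∑ i, (∏ j ∈ univ.erase i, w (a j)) * w (a i + 1) - m * (w 1 * ∏ i, w (a i)) := by
    simp only [mul_sub, sum_sub_distrib, mul_left_comm _ (w 1), ← mul_sum,
      prod_erase_mul _ _ (mem_univ _), sum_const, Finset.card_fin, nsmul_eq_mul]
  have bump : ∑ b ∈ compositionTuples (N + 1) m,
      ((N + 1 : ℝ) - #{i | b i = 1}) * (((N ! : ℝ) / ∏ i, ((b i)! : ℝ)) * ∏ i, w (b i)) =
        ∑ b ∈ compositionTuples (N + 1) m, (((N + 1)! : ℝ) / ∏ i, ((b i)! : ℝ)) * ∏ i, w (b i)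
          - unitPartSum N m w := by
    rw [unitPartSum, ← sum_sub_distrib]
    refine sum_congr rfl fun b _ => ?_
    rw [factorial_succ]
    push_cast
    ring
  have ones : unitPartSum N (m + 1) w = (m + 1) * ∑ a ∈ compositionTuples N m,
      ((N ! : ℝ) / ∏ i, ((a i)! : ℝ)) * (w 1 * ∏ i, w (a i)) :=
    sum_compositionTuples_card_eq_one w N m
  have hm : (m + 1 : ℝ) ≠ 0 := by positivity
  simp only [expand]
  simp only [mul_sub, sum_sub_distrib, sum_compositionTuples_raisePart, bump, ones,
    mul_left_comm _ (m : ℝ), ← mul_sum]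
  field_simp

theorem logCoeff_succ (w : ℕ → ℝ) {N : ℕ} (hN : 1 ≤ N) :
    logCoeff (N + 1) w = ∑ m ∈ Icc 1 N, (-1 : ℝ) ^ (m + 1) * (1 / (m : ℝ)) *
      ∑ a ∈ compositionTuples N m, ((N ! : ℝ) / ∏ i, ((a i)! : ℝ)) *
        ∑ i, (∏ j ∈ univ.erase i, w (a j)) * (w (a i + 1) - w 1 * w (a i)) := by
  set S : ℕ → ℝ := fun m => (-1 : ℝ) ^ (m + 1) * (1 / (m : ℝ)) *
    ∑ b ∈ compositionTuples (N + 1) m, (((N + 1)! : ℝ) / ∏ i, ((b i)! : ℝ)) * ∏ i, w (b i)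
  set T : ℕ → ℝ := fun m => (-1 : ℝ) ^ (m + 1) * (1 / (m : ℝ)) * unitPartSum N m w
  have term (m : ℕ) (hm : m ∈ Icc 1 N) :
      (-1 : ℝ) ^ (m + 1) * (1 / (m : ℝ)) *
        ∑ a ∈ compositionTuples N m, ((N ! : ℝ) / ∏ i, ((a i)! : ℝ)) *
          ∑ i, (∏ j ∈ univ.erase i, w (a j)) * (w (a i + 1) - w 1 * w (a i)) =
        S m + (T (m + 1) - T m) := by
    have : (m : ℝ) ≠ 0 := by have := (mem_Icc.mp hm).1; positivity
    simp only [S, T, sum_compositionTuples_derivation]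
    push_cast
    field_simp
    ring
  rw [sum_congr rfl term, sum_add_distrib, sum_Icc_sub (by omega), logCoeff,
    sum_Icc_succ_top (by omega)]
  simp only [T, unitPartSum_one w hN, unitPartSum_self]
  ring

theorem hasDerivAt_logCoeff {N : ℕ} {w : ℕ → ℝ → ℝ} {w' : ℕ → ℝ} {x : ℝ}
    (hw : ∀ k ∈ Icc 1 N, HasDerivAt (w k) (w' k) x) :
    HasDerivAt (fun t => logCoeff N fun k => w k t)
      (∑ m ∈ Icc 1 N, (-1 : ℝ) ^ (m + 1) * (1 / (m : ℝ)) *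
        ∑ a ∈ compositionTuples N m, ((N ! : ℝ) / ∏ i, ((a i)! : ℝ)) *
          ∑ i, (∏ j ∈ univ.erase i, w (a j) x) * w' (a i)) x := by
  refine HasDerivAt.fun_sum fun m _ => HasDerivAt.const_mul _ <|
    HasDerivAt.fun_sum fun a ha => HasDerivAt.const_mul _ ?_
  simpa only [smul_eq_mul] using
    HasDerivAt.fun_finsetProd fun i _ => hw _ (mem_Icc_of_mem_compositionTuples ha i)

theorem ContDiffOn.differentiableAt_iteratedDeriv {𝕜 F : Type*} [NontriviallyNormedField 𝕜]
    [NormedAddCommGroup F] [NormedSpace 𝕜 F] {f : 𝕜 → F} {s : Set 𝕜} {n : WithTop ℕ∞} {k : ℕ}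
    (hf : ContDiffOn 𝕜 n f s) (hs : IsOpen s) (hk : k < n) {x : 𝕜} (hx : x ∈ s) :
    DifferentiableAt 𝕜 (iteratedDeriv k f) x :=
  ((hf.differentiableOn_iteratedDerivWithin hk hs.uniqueDiffOn).congr
    fun _ hz => (iteratedDerivWithin_of_isOpen hs hz).symm).differentiableAt (hs.mem_nhds hx)

theorem hasDerivAt_iteratedDeriv_div_self {y : ℝ → ℝ} {U : Set ℝ} {n : WithTop ℕ∞} {k : ℕ}
    (hy : ContDiffOn ℝ n y U) (hU : IsOpen U) (hk : k < n) {x : ℝ} (hx : x ∈ U) (hyx : y x ≠ 0) :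
    HasDerivAt (fun t => iteratedDeriv k y t / y t)
      (iteratedDeriv (k + 1) y x / y x - iteratedDeriv 1 y x / y x * (iteratedDeriv k y x / y x))
      x := by
  have hk' := (hy.differentiableAt_iteratedDeriv hU hk hx).hasDerivAt
  have h0 := (hy.differentiableAt_iteratedDeriv hU
    ((Nat.cast_le.mpr k.zero_le).trans_lt hk) hx).hasDerivAt
  rw [← iteratedDeriv_succ] at hk'
  rw [iteratedDeriv_zero, ← iteratedDeriv_one] at h0
  refine (hk'.div h0 hyx).congr_deriv ?_
  field_simp

theorem iteratedDeriv_logDeriv_eq_logCoeff {U : Set ℝ} (hU : IsOpen U) {y : ℝ → ℝ}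
    (hy0 : ∀ x ∈ U, y x ≠ 0) {n : ℕ} (hy : ContDiffOn ℝ (n + 1) y U) {x : ℝ} (hx : x ∈ U) :
    iteratedDeriv n (fun t => deriv y t / y t) x =
      logCoeff (n + 1) fun k => iteratedDeriv k y x / y x := by
  induction n generalizing x with
  | zero => simp [logCoeff_one, iteratedDeriv_one]
  | succ n ih =>
    have hnear : iteratedDeriv n (fun t => deriv y t / y t) =ᶠ[nhds x]
        fun t => logCoeff (n + 1) fun k => iteratedDeriv k y t / y t :=
      Filter.eventuallyEq_of_mem (hU.mem_nhds hx) fun z hz => ih (hy.of_le (by simp)) hz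
    rw [iteratedDeriv_succ, hnear.deriv_eq, logCoeff_succ _ (by omega)]
    refine (hasDerivAt_logCoeff fun k hk => hasDerivAt_iteratedDeriv_div_self hy hU ?_ hx
      (hy0 x hx)).deriv
    have := (mem_Icc.mp hk).2
    exact_mod_cast (show k < n + 1 + 1 by omega)

/-- Lemma 2.3: explicit formula for the higher derivatives of the logarithmic derivative
`y′/y`:
`d^n/dx^n (y′/y) = ∑_{m=1}^{n+1} (−1)^{m+1} (1/m)
  ∑_{(a_1,…,a_m), a_i ≥ 1, ∑ a_i = n+1} ((n+1)!/(a_1!⋯a_m!)) y^{(a_1)}⋯y^{(a_m)}/y^m`,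
where the inner sum runs over ordered `m`-tuples of positive integers summing to `n+1`. -/
theorem iteratedDeriv_logDeriv_formula (U : Set ℝ) (hU : IsOpen U) (y : ℝ → ℝ) (n : ℕ)
    (hy : ContDiffOn ℝ (n + 1) y U) (hy0 : ∀ x ∈ U, y x ≠ 0) :
    ∀ x ∈ U,
      iteratedDeriv n (fun t => deriv y t / y t) x =
        ∑ m ∈ Finset.Icc 1 (n + 1), (-1 : ℝ) ^ (m + 1) * (1 / (m : ℝ)) *
          ∑ a ∈ (Fintype.piFinset fun _ : Fin m => Finset.range (n + 2)).filter
              (fun a => (∀ i, 1 ≤ a i) ∧ ∑ i, a i = n + 1),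
            ((Nat.factorial (n + 1) : ℝ) / ∏ i, (Nat.factorial (a i) : ℝ)) *
              (∏ i, iteratedDeriv (a i) y x) / (y x) ^ m := by
  intro x hx
  rw [iteratedDeriv_logDeriv_eq_logCoeff hU hy0 hy hx, logCoeff]
  simp only [prod_div_distrib, prod_const, Finset.card_fin, mul_div_assoc]
  rfl
end

section
/- Lemma 3.2: the following three statements are equivalent: (1) f_0(I) ∪ f_1(I) ⊊ I (strict inclusion); (2) f_0(I) ∩ f_1(I) = ∅; (3) f_1(p_0) < f_0(p_1). -/
/-- `f_0(x) = ((1−ε)/ε)·(π_00 x + π_10)/(π_01 x + π_11)`. -/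
noncomputable def f₀ (π00 π01 π10 π11 ε : ℝ) (x : ℝ) : ℝ :=
  ((1 - ε) / ε) * ((π00 * x + π10) / (π01 * x + π11))

/-- `f_1(x) = (ε/(1−ε))·(π_00 x + π_10)/(π_01 x + π_11)`. -/
noncomputable def f₁ (π00 π01 π10 π11 ε : ℝ) (x : ℝ) : ℝ :=
  (ε / (1 - ε)) * ((π00 * x + π10) / (π01 * x + π11))

/-- Lemma 3.2: with `I = [p_1, p_0]`, the following are equivalent:
(1) `f_0(I) ∪ f_1(I) ⊊ I`; (2) `f_0(I) ∩ f_1(I) = ∅`; (3) `f_1(p_0) < f_0(p_1)`. -/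
theorem overlap_equiv (π00 π01 π10 π11 ε : ℝ)
    (h00 : 0 < π00) (h01 : 0 < π01) (h10 : 0 < π10) (h11 : 0 < π11)
    (hrow0 : π00 + π01 = 1) (hrow1 : π10 + π11 = 1)
    (hdet : 0 < π00 * π11 - π01 * π10)
    (hε0 : 0 < ε) (hε : ε < 1 / 2)
    (p₀ p₁ : ℝ) (hp₀ : 0 < p₀) (hp₁ : 0 < p₁)
    (hfix₀ : f₀ π00 π01 π10 π11 ε p₀ = p₀) (hfix₁ : f₁ π00 π01 π10 π11 ε p₁ = p₁)
    (huniq₀ : ∀ q : ℝ, 0 < q → f₀ π00 π01 π10 π11 ε q = q → q = p₀)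
    (huniq₁ : ∀ q : ℝ, 0 < q → f₁ π00 π01 π10 π11 ε q = q → q = p₁) :
    ((f₀ π00 π01 π10 π11 ε '' Set.Icc p₁ p₀ ∪ f₁ π00 π01 π10 π11 ε '' Set.Icc p₁ p₀)
        ⊂ Set.Icc p₁ p₀ ↔
      f₀ π00 π01 π10 π11 ε '' Set.Icc p₁ p₀ ∩ f₁ π00 π01 π10 π11 ε '' Set.Icc p₁ p₀ = ∅) ∧
    (f₀ π00 π01 π10 π11 ε '' Set.Icc p₁ p₀ ∩ f₁ π00 π01 π10 π11 ε '' Set.Icc p₁ p₀ = ∅ ↔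
      f₁ π00 π01 π10 π11 ε p₀ < f₀ π00 π01 π10 π11 ε p₁) := by
  set f0 := f₀ π00 π01 π10 π11 ε with hf0
  set f1 := f₁ π00 π01 π10 π11 ε with hf1
  have h1ε : 0 < 1 - ε := by linarith
  -- denominators and numerators positive
  have hden : ∀ x : ℝ, 0 ≤ x → 0 < π01 * x + π11 := fun x hx => by positivity
  have hnum : ∀ x : ℝ, 0 ≤ x → 0 < π00 * x + π10 := fun x hx => by positivity
  have hR : ∀ x : ℝ, 0 ≤ x → 0 < (π00 * x + π10) / (π01 * x + π11) := fun x hx =>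
    div_pos (hnum x hx) (hden x hx)
  -- f1 < f0 pointwise on nonneg reals
  have hlt : ∀ x : ℝ, 0 ≤ x → f1 x < f0 x := by
    intro x hx
    have : ε / (1 - ε) < (1 - ε) / ε := by
      rw [div_lt_div_iff₀ h1ε hε0]; nlinarith
    exact mul_lt_mul_of_pos_right this (hR x hx)
  -- monotonicity of the rational part
  have hRmono : ∀ x y : ℝ, 0 ≤ x → x ≤ y →
      (π00 * x + π10) / (π01 * x + π11) ≤ (π00 * y + π10) / (π01 * y + π11) := by
    intro x y hx hxy
    rw [div_le_div_iff₀ (hden x hx) (hden y (hx.trans hxy))]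
    nlinarith
  have hmono0 : ∀ x y : ℝ, 0 ≤ x → x ≤ y → f0 x ≤ f0 y := by
    intro x y hx hxy
    exact mul_le_mul_of_nonneg_left (hRmono x y hx hxy) (by positivity)
  have hmono1 : ∀ x y : ℝ, 0 ≤ x → x ≤ y → f1 x ≤ f1 y := by
    intro x y hx hxy
    exact mul_le_mul_of_nonneg_left (hRmono x y hx hxy) (by positivity)
  -- continuity on any set of nonnegative reals
  have hcont : ∀ s : Set ℝ, s ⊆ Set.Ici 0 → ContinuousOn f0 s ∧ ContinuousOn f1 s := by
    intro s hs
    have hne : ∀ x ∈ s, π01 * x + π11 ≠ 0 := fun x hx => (hden x (hs hx)).ne'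
    constructor
    · exact continuousOn_const.mul (ContinuousOn.div (by fun_prop) (by fun_prop) hne)
    · exact continuousOn_const.mul (ContinuousOn.div (by fun_prop) (by fun_prop) hne)
  -- p₁ ≤ p₀
  have hbound : ∀ x : ℝ, 0 ≤ x → f0 x ≤ (1 - ε) / ε * (π00 / π01 + π10 / π11) := by
    intro x hx
    apply mul_le_mul_of_nonneg_left _ (by positivity)
    rw [div_le_iff₀ (hden x hx)]
    have h1 : π00 / π01 * π01 = π00 := by field_simp
    have h2 : π10 / π11 * π11 = π10 := by field_simp
    have h3 : 0 ≤ π00 / π01 := by positivity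
    have h4 : 0 ≤ π10 / π11 := by positivity
    nlinarith [mul_nonneg h3 (mul_nonneg h11.le hx), mul_nonneg h4 (mul_nonneg h01.le hx)]
  have hp₁p₀ : p₁ ≤ p₀ := by
    set C := (1 - ε) / ε * (π00 / π01 + π10 / π11) with hC
    set M := max p₁ C + 1 with hM
    have hp₁M : p₁ ≤ M := le_trans (le_max_left _ _) (by linarith)
    have hM0 : 0 < M := lt_of_lt_of_le hp₁ hp₁M
    have hgM : f0 M - M < 0 := by
      have := hbound M hM0.le
      have : f0 M ≤ C := this
      have hCM : C < M := lt_of_le_of_lt (le_max_right p₁ C) (by linarith)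
      linarith
    have hgp₁ : 0 < f0 p₁ - p₁ := by
      have := hlt p₁ hp₁.le
      rw [hfix₁] at this
      linarith
    have hcg : ContinuousOn (fun x => f0 x - x) (Set.Icc p₁ M) := by
      have := (hcont (Set.Icc p₁ M) (fun x hx => le_trans hp₁.le hx.1)).1
      exact this.sub continuousOn_id
    have h0mem : (0 : ℝ) ∈ Set.Icc (f0 M - M) (f0 p₁ - p₁) := ⟨hgM.le, hgp₁.le⟩
    obtain ⟨q, hq, hq0⟩ := intermediate_value_Icc' hp₁M hcg h0mem
    have hqfix : f0 q = q := by
      have : f0 q - q = 0 := hq0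
      linarith
    have hqpos : 0 < q := lt_of_lt_of_le hp₁ hq.1
    have := huniq₀ q hqpos hqfix
    exact this ▸ hq.1
  -- key endpoint values
  set a := f0 p₁ with ha
  set b := f1 p₀ with hb
  have hp₁a : p₁ < a := by
    have := hlt p₁ hp₁.le; rw [hfix₁] at this; exact this
  have hbp₀ : b < p₀ := by
    have := hlt p₀ hp₀.le; rw [hfix₀] at this; exact this
  have hp₁b : p₁ ≤ b := by
    have := hmono1 p₁ p₀ hp₁.le hp₁p₀; rw [hfix₁] at this; exact this
  have hap₀ : a ≤ p₀ := by
    have := hmono0 p₁ p₀ hp₁.le hp₁p₀; rw [hfix₀] at this; exact this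
  -- images are intervals
  have hsub : Set.Icc p₁ p₀ ⊆ Set.Ici (0:ℝ) := fun x hx => le_trans hp₁.le hx.1
  have himg0 : f0 '' Set.Icc p₁ p₀ = Set.Icc a p₀ := by
    apply Set.Subset.antisymm
    · rintro y ⟨x, hx, rfl⟩
      refine ⟨hmono0 p₁ x hp₁.le hx.1, ?_⟩
      have := hmono0 x p₀ (le_trans hp₁.le hx.1) hx.2
      rw [hfix₀] at this; exact this
    · have := intermediate_value_Icc hp₁p₀ (hcont _ hsub).1
      rw [hfix₀] at this; exact this
  have himg1 : f1 '' Set.Icc p₁ p₀ = Set.Icc p₁ b := by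
    apply Set.Subset.antisymm
    · rintro y ⟨x, hx, rfl⟩
      refine ⟨?_, hmono1 x p₀ (le_trans hp₁.le hx.1) hx.2⟩
      have := hmono1 p₁ x hp₁.le hx.1
      rw [hfix₁] at this; exact this
    · have := intermediate_value_Icc hp₁p₀ (hcont _ hsub).2
      rw [hfix₁] at this; exact this
  rw [himg0, himg1]
  -- intersection characterisation
  have hinter : Set.Icc a p₀ ∩ Set.Icc p₁ b = Set.Icc a b := by
    rw [Set.Icc_inter_Icc, max_eq_left hp₁a.le, min_eq_right hbp₀.le]
  have key2 : Set.Icc a p₀ ∩ Set.Icc p₁ b = ∅ ↔ b < a := by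
    rw [hinter, Set.Icc_eq_empty_iff, not_le]
  have key1 : Set.Icc a p₀ ∪ Set.Icc p₁ b ⊂ Set.Icc p₁ p₀ ↔ b < a := by
    constructor
    · intro hss
      by_contra hab
      push_neg at hab
      apply hss.2
      intro x hx
      by_cases hxb : x ≤ b
      · exact Or.inr ⟨hx.1, hxb⟩
      · exact Or.inl ⟨le_trans hab (le_of_not_ge hxb), hx.2⟩
    · intro hba
      constructor
      · apply Set.union_subset
        · exact Set.Icc_subset_Icc hp₁a.le le_rfl
        · exact Set.Icc_subset_Icc le_rfl hbp₀.le
      · intro hsup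
        have hm : (a + b) / 2 ∈ Set.Icc p₁ p₀ := ⟨by linarith, by linarith⟩
        rcases hsup hm with h | h
        · have := h.1; linarith
        · have := h.2; linarith
  exact ⟨key1.trans key2.symm, key2⟩
end

section
/- Support of Blackwell's measure (Theorem 3.1): supp(Q) equals the closure of L, where L = ⋃_{n≥1} L_n and L_n = { f_{i_1}∘f_{i_2}∘⋯∘f_{i_n}(p_j) : i_1,…,i_n ∈ {0,1}, j ∈ {0,1} }. -/
/-!
In the coordinate `t = log x` every `f_b` is a contraction of `ℝ` whose ratio `s < 1` is
Birkhoff's contraction coefficient of `Π`, and since `r_b > 0`, preimages under `f_b` of `Q`-null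
sets are `Q`-null. So for `x > 0` the points `f_w (f_jᵏ x)` converge to `f_w p_j`, and every
neighbourhood of a point of `L` has positive mass. Conversely, the log-distance `D` to the compact,
`f_b`-invariant set `closure L` satisfies `D ∘ f_b ≤ s D`; integrating against the invariance
equation, where `r₀ + r₁ = 1`, gives `∫ D dQ ≤ s ∫ D dQ`, so `D = 0` almost everywhere.
-/

open MeasureTheory

/-- `r_0(x) = (((1−ε)π_00 + επ_01)x + ((1−ε)π_10 + επ_11))/(x+1)`. -/
noncomputable def r₀ (π00 π01 π10 π11 ε : ℝ) (x : ℝ) : ℝ :=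
  (((1 - ε) * π00 + ε * π01) * x + ((1 - ε) * π10 + ε * π11)) / (x + 1)

/-- `r_1(x) = ((επ_00 + (1−ε)π_01)x + (επ_10 + (1−ε)π_11))/(x+1)`. -/
noncomputable def r₁ (π00 π01 π10 π11 ε : ℝ) (x : ℝ) : ℝ :=
  ((ε * π00 + (1 - ε) * π01) * x + (ε * π10 + (1 - ε) * π11)) / (x + 1)

/-- `f_b` for a binary symbol `b`. -/
noncomputable def fb (π00 π01 π10 π11 ε : ℝ) (b : Bool) : ℝ → ℝ :=
  if b then f₁ π00 π01 π10 π11 ε else f₀ π00 π01 π10 π11 ε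

/-- The support of a measure on `ℝ`: the set of points all of whose open neighborhoods
have positive measure (the smallest closed set of full measure). -/
def measSupp (Q : Measure ℝ) : Set ℝ :=
  {x : ℝ | ∀ U : Set ℝ, IsOpen U → x ∈ U → 0 < Q U}

/-- Blackwell's invariance equation
`Q(E) = ∫_{f_0^{−1}(E)} r_0 dQ + ∫_{f_1^{−1}(E)} r_1 dQ` for Borel `E ⊆ (0,∞)`. -/
def BlackwellInvariant (π00 π01 π10 π11 ε : ℝ) (Q : Measure ℝ) : Prop :=
  ∀ E : Set ℝ, MeasurableSet E → E ⊆ Set.Ioi (0 : ℝ) →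
    Q E = (∫⁻ x in f₀ π00 π01 π10 π11 ε ⁻¹' E, ENNReal.ofReal (r₀ π00 π01 π10 π11 ε x) ∂Q)
      + ∫⁻ x in f₁ π00 π01 π10 π11 ε ⁻¹' E, ENNReal.ofReal (r₁ π00 π01 π10 π11 ε x) ∂Q

/-- The set `L = ⋃_{n ≥ 1} { f_{i_1}∘⋯∘f_{i_n}(p_j) : i_1,…,i_n ∈ {0,1}, j ∈ {0,1} }`. -/
def setL (π00 π01 π10 π11 ε p₀ p₁ : ℝ) : Set ℝ :=
  {x : ℝ | ∃ n : ℕ, ∃ w : Fin (n + 1) → Bool, ∃ j : Bool,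
    x = (List.ofFn w).foldr (fun i acc => fb π00 π01 π10 π11 ε i acc)
          (if j then p₁ else p₀)}

open Real Set Filter Topology Metric Measure
open scoped ENNReal NNReal

section Birkhoff

variable {a b c d : ℝ}

/-- Birkhoff's contraction coefficient `tanh (Δ / 4)` of the positive matrix `!![a, b; c, d]`
(`Δ` its projective diameter): the ratio by which `x ↦ (a x + b) / (c x + d)` contracts the
metric `|log x - log y|` on `(0, ∞)`. -/
noncomputable def birkhoffCoeff (a b c d : ℝ) : ℝ :=
  (√(a * d) - √(b * c)) / (√(a * d) + √(b * c))

lemma birkhoffCoeff_nonneg (h : b * c ≤ a * d) : 0 ≤ birkhoffCoeff a b c d :=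
  div_nonneg (sub_nonneg.2 (Real.sqrt_le_sqrt h)) (by positivity)

lemma birkhoffCoeff_lt_one (hb : 0 < b) (hc : 0 < c) : birkhoffCoeff a b c d < 1 := by
  have hβ : 0 < √(b * c) := Real.sqrt_pos.2 (mul_pos hb hc)
  rw [birkhoffCoeff, div_lt_one (by positivity)]
  linarith [Real.sqrt_nonneg (a * d)]

lemma mul_det_le_birkhoffCoeff_mul (ha : 0 < a) (hb : 0 < b) (hc : 0 < c) (hd : 0 < d)
    (h : b * c ≤ a * d) (u : ℝ) :
    u * (a * d - b * c) ≤ birkhoffCoeff a b c d * ((a * u + b) * (c * u + d)) := by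
  rw [birkhoffCoeff]
  set α := √(a * d)
  set β := √(b * c)
  have hα : α ^ 2 = a * d := Real.sq_sqrt (by positivity)
  have hβ : β ^ 2 = b * c := Real.sq_sqrt (by positivity)
  have hβ0 : 0 < β := Real.sqrt_pos.2 (mul_pos hb hc)
  have hαβ : β ≤ α := Real.sqrt_le_sqrt h
  have hsq : a * c * ((a * u + b) * (c * u + d) - (α + β) ^ 2 * u) = (a * c * u - α * β) ^ 2 := by
    linear_combination (-a * c * u - β ^ 2) * hα + (-a * c * u - a * d) * hβ
  have hamgm : (α + β) ^ 2 * u ≤ (a * u + b) * (c * u + d) :=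
    sub_nonneg.1 (nonneg_of_mul_nonneg_right (hsq ▸ sq_nonneg _) (mul_pos ha hc))
  have hdet : a * d - b * c = (α - β) * (α + β) := by rw [← hα, ← hβ]; ring
  rw [div_mul_eq_mul_div, le_div_iff₀ (by positivity), hdet]
  nlinarith [mul_le_mul_of_nonneg_left hamgm (sub_nonneg.2 hαβ)]

end Birkhoff

section MobiusLog

variable {a b c d κ : ℝ}

lemma mobius_mem_Icc (hc : 0 < c) (hd : 0 < d) (h : b * c ≤ a * d)
    {x : ℝ} (hx : 0 ≤ x) : (a * x + b) / (c * x + d) ∈ Icc (b / d) (a / c) := by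
  constructor
  · rw [div_le_div_iff₀ hd (by positivity)]; nlinarith
  · rw [div_le_div_iff₀ (by positivity) hc]; nlinarith

lemma hasDerivAt_log_mul_mobius_exp (hκ : 0 < κ) (ha : 0 < a) (hb : 0 < b) (hc : 0 < c)
    (hd : 0 < d) (t : ℝ) :
    HasDerivAt (fun t => log (κ * ((a * exp t + b) / (c * exp t + d))))
      (exp t * (a * d - b * c) / ((a * exp t + b) * (c * exp t + d))) t := by
  have hN : ∀ t, 0 < a * exp t + b := fun t => by positivity
  have hM : ∀ t, 0 < c * exp t + d := fun t => by positivity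
  have hsplit : (fun t => log (κ * ((a * exp t + b) / (c * exp t + d))))
      = fun t => log κ + (log (a * exp t + b) - log (c * exp t + d)) := by
    ext t
    rw [log_mul hκ.ne' (div_pos (hN t) (hM t)).ne', log_div (hN t).ne' (hM t).ne']
  have hlogN := (((hasDerivAt_exp t).const_mul a).add_const b).log (hN t).ne'
  have hlogM := (((hasDerivAt_exp t).const_mul c).add_const d).log (hM t).ne'
  rw [hsplit]
  refine ((hlogN.sub hlogM).const_add (log κ)).congr_deriv ?_
  field_simp
  ring

lemma lipschitzWith_log_mul_mobius_exp (hκ : 0 < κ) (ha : 0 < a) (hb : 0 < b) (hc : 0 < c)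
    (hd : 0 < d) (h : b * c ≤ a * d) :
    LipschitzWith (birkhoffCoeff a b c d).toNNReal
      (fun t => log (κ * ((a * exp t + b) / (c * exp t + d)))) := by
  have hderiv := hasDerivAt_log_mul_mobius_exp hκ ha hb hc hd
  refine lipschitzWith_of_nnnorm_deriv_le (fun t => (hderiv t).differentiableAt) fun t => ?_
  rw [(hderiv t).deriv, ← NNReal.coe_le_coe, coe_nnnorm,
    Real.coe_toNNReal _ (birkhoffCoeff_nonneg h),
    Real.norm_eq_abs, abs_of_nonneg (by have := sub_nonneg.2 h; positivity),
    div_le_iff₀ (by positivity)]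
  exact mul_det_le_birkhoffCoeff_mul ha hb hc hd h _

end MobiusLog

structure BlackwellParams (π00 π01 π10 π11 ε : ℝ) : Prop where
  π00_pos : 0 < π00
  π01_pos : 0 < π01
  π10_pos : 0 < π10
  π11_pos : 0 < π11
  row₀ : π00 + π01 = 1
  row₁ : π10 + π11 = 1
  det_pos : 0 < π00 * π11 - π01 * π10
  ε_pos : 0 < ε
  ε_lt_half : ε < 1 / 2

noncomputable def fbGain (ε : ℝ) (b : Bool) : ℝ := if b then ε / (1 - ε) else (1 - ε) / ε

section Maps

variable {π00 π01 π10 π11 ε : ℝ}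

local notation "𝔣" => fb π00 π01 π10 π11 ε

lemma fb_apply (b : Bool) (x : ℝ) :
    𝔣 b x = fbGain ε b * ((π00 * x + π10) / (π01 * x + π11)) := by
  cases b <;> rfl

lemma measurable_fb (b : Bool) : Measurable (𝔣 b) := by
  simp only [funext (fb_apply b)]; fun_prop

noncomputable def logFb (π00 π01 π10 π11 ε : ℝ) (b : Bool) (t : ℝ) : ℝ :=
  log (fb π00 π01 π10 π11 ε b (exp t))

lemma logFb_log (b : Bool) {x : ℝ} (hx : 0 < x) :
    logFb π00 π01 π10 π11 ε b (log x) = log (𝔣 b x) := by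
  rw [logFb, exp_log hx]

namespace BlackwellParams

variable (hP : BlackwellParams π00 π01 π10 π11 ε)
include hP

lemma one_sub_ε_pos : 0 < 1 - ε := by linarith [hP.ε_lt_half]

lemma fbGain_mem_Icc (b : Bool) : fbGain ε b ∈ Icc (ε / (1 - ε)) ((1 - ε) / ε) := by
  have hle : ε / (1 - ε) ≤ (1 - ε) / ε := by
    rw [div_le_div_iff₀ hP.one_sub_ε_pos hP.ε_pos]; nlinarith [hP.ε_lt_half, hP.ε_pos]
  cases b
  · exact ⟨hle, le_rfl⟩
  · exact ⟨le_rfl, hle⟩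

lemma fbGain_pos (b : Bool) : 0 < fbGain ε b :=
  (div_pos hP.ε_pos hP.one_sub_ε_pos).trans_le (hP.fbGain_mem_Icc b).1

lemma exists_mapsTo_Icc : ∃ lo hi : ℝ, 0 < lo ∧ ∀ b, MapsTo (𝔣 b) (Ioi 0) (Icc lo hi) := by
  have := hP.π00_pos; have := hP.π01_pos; have := hP.π10_pos; have := hP.π11_pos
  have := hP.ε_pos; have := hP.one_sub_ε_pos
  refine ⟨ε / (1 - ε) * (π10 / π11), (1 - ε) / ε * (π00 / π01), by positivity, fun b x hx => ?_⟩
  obtain ⟨hlo, hhi⟩ := mobius_mem_Icc (a := π00) (b := π10) hP.π01_pos hP.π11_pos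
    (by linarith [hP.det_pos]) (le_of_lt hx)
  rw [fb_apply]
  exact ⟨mul_le_mul (hP.fbGain_mem_Icc b).1 hlo (by positivity) (hP.fbGain_pos b).le,
    mul_le_mul (hP.fbGain_mem_Icc b).2 hhi ((by positivity : (0 : ℝ) ≤ π10 / π11).trans hlo)
      (by positivity)⟩

lemma fb_pos (b : Bool) {x : ℝ} (hx : 0 < x) : 0 < 𝔣 b x := by
  obtain ⟨lo, hi, hlo, hmaps⟩ := hP.exists_mapsTo_Icc
  exact hlo.trans_le (hmaps b hx).1

lemma continuousOn_fb (b : Bool) : ContinuousOn (𝔣 b) (Ioi 0) := by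
  have := hP.π01_pos; have := hP.π11_pos
  simp only [funext (fb_apply b)]
  exact continuousOn_const.mul
    (ContinuousOn.div (by fun_prop) (by fun_prop) fun x (hx : 0 < x) => by positivity)

lemma exp_logFb (b : Bool) (t : ℝ) : exp (logFb π00 π01 π10 π11 ε b t) = 𝔣 b (exp t) :=
  exp_log (hP.fb_pos b (exp_pos t))

lemma contractingWith_logFb (b : Bool) :
    ContractingWith (birkhoffCoeff π00 π10 π01 π11).toNNReal (logFb π00 π01 π10 π11 ε b) := by
  refine ⟨Real.toNNReal_lt_one.2 (birkhoffCoeff_lt_one hP.π10_pos hP.π01_pos), ?_⟩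
  rw [show logFb π00 π01 π10 π11 ε b = _ from funext fun t => congrArg log (fb_apply b (exp t))]
  exact lipschitzWith_log_mul_mobius_exp (hP.fbGain_pos b) hP.π00_pos hP.π10_pos hP.π01_pos
    hP.π11_pos (by linarith [hP.det_pos])

lemma tendsto_iterate_fb {j : Bool} {x p : ℝ} (hx : 0 < x) (hp : 0 < p) (hfix : 𝔣 j p = p) :
    Tendsto (fun k => (𝔣 j)^[k] x) atTop (𝓝 p) := by
  have hc := hP.contractingWith_logFb j
  have hfixlog : Function.IsFixedPt (logFb π00 π01 π10 π11 ε j) (log p) := by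
    rw [Function.IsFixedPt, logFb_log j hp, hfix]
  have hsemi : Function.Semiconj exp (logFb π00 π01 π10 π11 ε j) (𝔣 j) := hP.exp_logFb j
  have hlim := (continuous_exp.tendsto _).comp (hc.tendsto_iterate_fixedPoint (log x))
  rw [← hc.fixedPoint_unique hfixlog, exp_log hp] at hlim
  refine hlim.congr fun k => ?_
  rw [Function.comp_apply, (hsemi.iterate_right k).eq, exp_log hx]

end BlackwellParams

end Maps

section Weights

variable {π00 π01 π10 π11 ε : ℝ}

lemma measurable_r₀ : Measurable (r₀ π00 π01 π10 π11 ε) := by unfold r₀; fun_prop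

lemma measurable_r₁ : Measurable (r₁ π00 π01 π10 π11 ε) := by unfold r₁; fun_prop

namespace BlackwellParams

variable (hP : BlackwellParams π00 π01 π10 π11 ε)
include hP

lemma r₀_pos {x : ℝ} (hx : 0 < x) : 0 < r₀ π00 π01 π10 π11 ε x := by
  have := hP.π00_pos; have := hP.π01_pos; have := hP.π10_pos; have := hP.π11_pos
  have := hP.ε_pos; have := hP.one_sub_ε_pos
  unfold r₀; positivity

lemma r₁_pos {x : ℝ} (hx : 0 < x) : 0 < r₁ π00 π01 π10 π11 ε x := by
  have := hP.π00_pos; have := hP.π01_pos; have := hP.π10_pos; have := hP.π11_pos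
  have := hP.ε_pos; have := hP.one_sub_ε_pos
  unfold r₁; positivity

lemma r₀_add_r₁ {x : ℝ} (hx : 0 < x) :
    r₀ π00 π01 π10 π11 ε x + r₁ π00 π01 π10 π11 ε x = 1 := by
  unfold r₀ r₁
  rw [← add_div, div_eq_one_iff_eq (by positivity)]
  linear_combination x * hP.row₀ + hP.row₁

end BlackwellParams

end Weights

section Words

variable {π00 π01 π10 π11 ε : ℝ}

local notation "𝔣" => fb π00 π01 π10 π11 ε

noncomputable def fword (π00 π01 π10 π11 ε : ℝ) (w : List Bool) (x : ℝ) : ℝ :=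
  w.foldr (fb π00 π01 π10 π11 ε) x

local notation "𝔣𝔴" => fword π00 π01 π10 π11 ε

lemma fword_append (v w : List Bool) : 𝔣𝔴 (v ++ w) = 𝔣𝔴 v ∘ 𝔣𝔴 w :=
  funext fun _ => List.foldr_append

lemma fword_replicate (k : ℕ) (b : Bool) : 𝔣𝔴 (List.replicate k b) = (𝔣 b)^[k] := by
  induction k with
  | zero => rfl
  | succ k ih => rw [Function.iterate_succ', ← ih]; rfl

lemma BlackwellParams.mapsTo_fword (hP : BlackwellParams π00 π01 π10 π11 ε) (w : List Bool) :
    MapsTo (𝔣𝔴 w) (Ioi 0) (Ioi 0) := by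
  induction w with
  | nil => exact mapsTo_id _
  | cons b w ih => exact MapsTo.comp (fun _ hx => hP.fb_pos b hx) ih

lemma BlackwellParams.continuousOn_fword (hP : BlackwellParams π00 π01 π10 π11 ε)
    (w : List Bool) : ContinuousOn (𝔣𝔴 w) (Ioi 0) := by
  induction w with
  | nil => exact continuousOn_id
  | cons b w ih => exact (hP.continuousOn_fb b).comp ih (hP.mapsTo_fword w)

variable {p₀ p₁ : ℝ}

local notation "𝔏" => setL π00 π01 π10 π11 ε p₀ p₁

lemma mem_setL_iff {x : ℝ} :
    x ∈ 𝔏 ↔ ∃ (b : Bool) (w : List Bool) (j : Bool), x = 𝔣𝔴 (b :: w) (if j then p₁ else p₀) := by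
  constructor
  · rintro ⟨n, w, j, rfl⟩
    exact ⟨w 0, List.ofFn fun i : Fin n => w i.succ, j, by rw [fword, ← List.ofFn_succ]⟩
  · rintro ⟨b, w, j, rfl⟩
    exact ⟨w.length, (b :: w).get, j, by rw [List.ofFn_get]; rfl⟩

lemma mapsTo_fb_setL (b : Bool) : MapsTo (𝔣 b) 𝔏 𝔏 := by
  intro x hx
  obtain ⟨b', w, j, rfl⟩ := mem_setL_iff.1 hx
  exact mem_setL_iff.2 ⟨b, b' :: w, j, rfl⟩

lemma mem_setL_of_fixed (hfix₀ : f₀ π00 π01 π10 π11 ε p₀ = p₀) : p₀ ∈ 𝔏 :=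
  mem_setL_iff.2 ⟨false, [], false, hfix₀.symm⟩

namespace BlackwellParams

variable (hP : BlackwellParams π00 π01 π10 π11 ε) (hp₀ : 0 < p₀) (hp₁ : 0 < p₁)
include hP hp₀ hp₁

lemma exists_closure_setL_subset_Icc : ∃ lo hi : ℝ, 0 < lo ∧ closure 𝔏 ⊆ Icc lo hi := by
  obtain ⟨lo, hi, hlo, hmaps⟩ := hP.exists_mapsTo_Icc
  refine ⟨lo, hi, hlo, closure_minimal (fun x hx => ?_) isClosed_Icc⟩
  obtain ⟨b, w, j, rfl⟩ := mem_setL_iff.1 hx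
  exact hmaps b (hP.mapsTo_fword w (by cases j <;> assumption))

lemma closure_setL_subset_Ioi : closure 𝔏 ⊆ Ioi 0 := by
  obtain ⟨lo, hi, hlo, hsub⟩ := hP.exists_closure_setL_subset_Icc hp₀ hp₁
  exact fun x hx => hlo.trans_le (hsub hx).1

lemma isCompact_closure_setL : IsCompact (closure 𝔏) := by
  obtain ⟨lo, hi, -, hsub⟩ := hP.exists_closure_setL_subset_Icc hp₀ hp₁
  exact isCompact_Icc.of_isClosed_subset isClosed_closure hsub

lemma mapsTo_fb_closure_setL (b : Bool) : MapsTo (𝔣 b) (closure 𝔏) (closure 𝔏) :=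
  (mapsTo_fb_setL b).closure_of_continuousOn
    ((hP.continuousOn_fb b).mono (hP.closure_setL_subset_Ioi hp₀ hp₁))

end BlackwellParams

end Words

lemma ENNReal.eq_zero_of_le_mul_of_lt_one {a c : ℝ≥0∞} (hc : c < 1) (ha : a ≠ ∞)
    (h : a ≤ c * a) : a = 0 := by
  by_contra ha0
  have := (ENNReal.mul_lt_mul_iff_left ha0 ha).2 hc
  rw [one_mul] at this
  exact (this.trans_le h).false

lemma LipschitzWith.infEDist_le_mul {α : Type*} [PseudoEMetricSpace α] {f : α → α} {K : ℝ≥0}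
    (hf : LipschitzWith K f) {s : Set α} (hs : IsCompact s) (hne : s.Nonempty) (hfs : MapsTo f s s)
    (x : α) : infEDist (f x) s ≤ K * infEDist x s := by
  obtain ⟨y, hy, hxy⟩ := hs.exists_infEDist_eq_edist hne x
  rw [hxy]
  exact (infEDist_le_edist_of_mem (hfs hy)).trans (hf x y)

lemma measSupp_eq_support (Q : Measure ℝ) : measSupp Q = Q.support := by
  rw [Measure.support_eq_forall_isOpen]
  ext x
  exact ⟨fun h U hxU hU => h U hU hxU, fun h U hU hxU => h U hxU hU⟩

section Invariance

variable {π00 π01 π10 π11 ε : ℝ} {Q : Measure ℝ}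

local notation "𝔣" => fb π00 π01 π10 π11 ε
local notation "𝔣𝔴" => fword π00 π01 π10 π11 ε

namespace BlackwellInvariant

variable (hinv : BlackwellInvariant π00 π01 π10 π11 ε Q)
  (hP : BlackwellParams π00 π01 π10 π11 ε) (hQ : ∀ᵐ x ∂Q, 0 < x)
include hinv hP hQ

lemma map_add_map_eq :
    (Q.withDensity fun x => ENNReal.ofReal (r₀ π00 π01 π10 π11 ε x)).map (𝔣 false)
      + (Q.withDensity fun x => ENNReal.ofReal (r₁ π00 π01 π10 π11 ε x)).map (𝔣 true) = Q := by
  ext E hE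
  have hpre : ∀ b, 𝔣 b ⁻¹' (E ∩ Ioi 0) =ᵐ[Q] 𝔣 b ⁻¹' E := fun b => by
    rw [preimage_inter]
    exact inter_ae_eq_left_of_ae_eq_univ <| ae_eq_univ.2 <|
      measure_mono_null (compl_subset_compl.2 fun x (hx : 0 < x) => hP.fb_pos b hx) hQ
  rw [Measure.add_apply, Measure.map_apply (measurable_fb false) hE,
    Measure.map_apply (measurable_fb true) hE, withDensity_apply _ (measurable_fb false hE),
    withDensity_apply _ (measurable_fb true hE), ← Measure.restrict_congr_set (hpre false),
    ← Measure.restrict_congr_set (hpre true)]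
  exact (hinv _ (hE.inter measurableSet_Ioi) inter_subset_right).symm.trans
    (measure_congr (inter_ae_eq_left_of_ae_eq_univ (ae_eq_univ.2 hQ)))

lemma lintegral_eq {φ : ℝ → ℝ≥0∞} (hφ : Measurable φ) :
    ∫⁻ x, φ x ∂Q = ∫⁻ x, ENNReal.ofReal (r₀ π00 π01 π10 π11 ε x) * φ (𝔣 false x) ∂Q
      + ∫⁻ x, ENNReal.ofReal (r₁ π00 π01 π10 π11 ε x) * φ (𝔣 true x) ∂Q := by
  conv_lhs => rw [← hinv.map_add_map_eq hP hQ]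
  rw [lintegral_add_measure, lintegral_map hφ (measurable_fb false),
    lintegral_map hφ (measurable_fb true)]
  congr 1
  exacts [lintegral_withDensity_eq_lintegral_mul _ measurable_r₀.ennreal_ofReal
      (hφ.comp (measurable_fb false)),
    lintegral_withDensity_eq_lintegral_mul _ measurable_r₁.ennreal_ofReal
      (hφ.comp (measurable_fb true))]

lemma lintegral_le_of_comp_le {φ ψ : ℝ → ℝ≥0∞} (hφ : Measurable φ)
    (h : ∀ b x, 0 < x → φ (𝔣 b x) ≤ ψ x) : ∫⁻ x, φ x ∂Q ≤ ∫⁻ x, ψ x ∂Q := by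
  rw [hinv.lintegral_eq hP hQ hφ]
  refine (lintegral_add_left (measurable_r₀.ennreal_ofReal.mul (hφ.comp (measurable_fb false)))
    _).symm.trans_le (lintegral_mono_ae (hQ.mono fun x hx => ?_))
  calc ENNReal.ofReal (r₀ π00 π01 π10 π11 ε x) * φ (𝔣 false x)
        + ENNReal.ofReal (r₁ π00 π01 π10 π11 ε x) * φ (𝔣 true x)
    _ ≤ ENNReal.ofReal (r₀ π00 π01 π10 π11 ε x) * ψ x
        + ENNReal.ofReal (r₁ π00 π01 π10 π11 ε x) * ψ x := by
      gcongr
      exacts [h false x hx, h true x hx]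
    _ = ψ x := by
      rw [← add_mul, ← ENNReal.ofReal_add (hP.r₀_pos hx).le (hP.r₁_pos hx).le,
        hP.r₀_add_r₁ hx, ENNReal.ofReal_one, one_mul]

lemma quasiMeasurePreserving_fb (b : Bool) : QuasiMeasurePreserving (𝔣 b) Q Q := by
  refine ⟨measurable_fb b, ?_⟩
  conv_rhs => rw [← hinv.map_add_map_eq hP hQ]
  cases b
  · refine (AbsolutelyContinuous.map ?_ (measurable_fb false)).add_right _
    exact withDensity_absolutelyContinuous' measurable_r₀.ennreal_ofReal.aemeasurable
      (hQ.mono fun x hx => (ENNReal.ofReal_pos.2 (hP.r₀_pos hx)).ne')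
  · rw [add_comm]
    refine (AbsolutelyContinuous.map ?_ (measurable_fb true)).add_right _
    exact withDensity_absolutelyContinuous' measurable_r₁.ennreal_ofReal.aemeasurable
      (hQ.mono fun x hx => (ENNReal.ofReal_pos.2 (hP.r₁_pos hx)).ne')

lemma quasiMeasurePreserving_fword (w : List Bool) : QuasiMeasurePreserving (𝔣𝔴 w) Q Q := by
  induction w with
  | nil => exact QuasiMeasurePreserving.id Q
  | cons b w ih => exact (hinv.quasiMeasurePreserving_fb hP hQ b).comp ih

lemma ae_eq_zero_of_comp_le [IsFiniteMeasure Q] {D : ℝ → ℝ≥0∞} (hD : Measurable D)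
    {s B : ℝ≥0∞} (hs : s < 1) (hB : B ≠ ∞) (hcontr : ∀ b x, 0 < x → D (𝔣 b x) ≤ s * D x)
    (hbdd : ∀ b x, 0 < x → D (𝔣 b x) ≤ B) : ∀ᵐ x ∂Q, D x = 0 := by
  have hfin : ∫⁻ x, D x ∂Q ≠ ∞ := by
    refine ((hinv.lintegral_le_of_comp_le hP hQ hD hbdd).trans_lt ?_).ne
    rw [lintegral_const]
    exact ENNReal.mul_lt_top hB.lt_top (measure_lt_top Q univ)
  have hle : ∫⁻ x, D x ∂Q ≤ s * ∫⁻ x, D x ∂Q :=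
    (hinv.lintegral_le_of_comp_le hP hQ hD hcontr).trans_eq (lintegral_const_mul s hD)
  exact (lintegral_eq_zero_iff hD).1 (ENNReal.eq_zero_of_le_mul_of_lt_one hs hfin hle)

lemma ae_mem_of_mapsTo [IsFiniteMeasure Q] {K : Set ℝ} (hK : IsCompact K) (hKpos : K ⊆ Ioi 0)
    (hKne : K.Nonempty) (hmaps : ∀ b, MapsTo (𝔣 b) K K) : ∀ᵐ x ∂Q, x ∈ K := by
  set A := log '' K
  have hA : IsCompact A :=
    hK.image_of_continuousOn (continuousOn_log.mono fun x hx => (hKpos hx).ne')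
  have hAne : A.Nonempty := hKne.image _
  have hmapsA : ∀ b, MapsTo (logFb π00 π01 π10 π11 ε b) A A := by
    rintro b _ ⟨a, ha, rfl⟩
    exact ⟨_, hmaps b ha, (logFb_log b (hKpos ha)).symm⟩
  -- `x ↦ infEDist (log x) A` is the log-distance `D` to `K`
  have hcontr : ∀ b x, 0 < x → infEDist (log (𝔣 b x)) A
      ≤ (birkhoffCoeff π00 π10 π01 π11).toNNReal * infEDist (log x) A := fun b x hx => by
    rw [← logFb_log b hx]
    exact (hP.contractingWith_logFb b).2.infEDist_le_mul hA hAne (hmapsA b) _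
  obtain ⟨lo, hi, hlo, hIcc⟩ := hP.exists_mapsTo_Icc
  have hlog : ∀ b x, 0 < x → log (𝔣 b x) ∈ Icc (log lo) (log hi) := fun b x hx =>
    ⟨log_le_log hlo (hIcc b hx).1, log_le_log (hlo.trans_le (hIcc b hx).1) (hIcc b hx).2⟩
  obtain ⟨y₀, -, hmax⟩ := isCompact_Icc.exists_isMaxOn ⟨_, hlog true 1 one_pos⟩
    (continuous_infEDist (s := A)).continuousOn
  filter_upwards [hinv.ae_eq_zero_of_comp_le hP hQ
    (continuous_infEDist.measurable.comp measurable_log)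
    (ENNReal.coe_lt_one_iff.2 (hP.contractingWith_logFb true).1) (infEDist_ne_top hAne)
    hcontr fun b x hx => hmax (hlog b x hx), hQ] with x hx hxpos
  obtain ⟨a, ha, hax⟩ := (mem_iff_infEDist_zero_of_closed hA.isClosed).2 hx
  rwa [← log_injOn_pos (hKpos ha) hxpos hax]

lemma fword_mem_measSupp [NeZero Q] {j : Bool} {p : ℝ} (hp : 0 < p) (hfix : 𝔣 j p = p)
    (w : List Bool) : 𝔣𝔴 w p ∈ measSupp Q := by
  intro U hU hpU
  have hcover : ⋃ k, 𝔣𝔴 (w ++ List.replicate k j) ⁻¹' U ∈ ae Q := by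
    refine mem_of_superset hQ fun x (hx : 0 < x) => ?_
    have hlim := ((hP.continuousOn_fword w).continuousAt (Ioi_mem_nhds hp)).tendsto.comp
      (hP.tendsto_iterate_fb hx hp hfix)
    obtain ⟨k, hk⟩ := (hlim.eventually (hU.mem_nhds hpU)).exists
    exact mem_iUnion.2 ⟨k, by rwa [mem_preimage, fword_append, fword_replicate]⟩
  have hcover_pos : Q (⋃ k, 𝔣𝔴 (w ++ List.replicate k j) ⁻¹' U) ≠ 0 := by
    rw [measure_congr (ae_eq_univ.2 hcover)]
    exact measure_univ_ne_zero.2 (NeZero.ne Q)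
  obtain ⟨k, hk⟩ := not_forall.1 (mt measure_iUnion_null hcover_pos)
  exact pos_iff_ne_zero.2 fun hU0 =>
    hk ((hinv.quasiMeasurePreserving_fword hP hQ _).preimage_null hU0)

lemma setL_subset_measSupp [NeZero Q] {p₀ p₁ : ℝ} (hp₀ : 0 < p₀) (hp₁ : 0 < p₁)
    (hfix₀ : f₀ π00 π01 π10 π11 ε p₀ = p₀) (hfix₁ : f₁ π00 π01 π10 π11 ε p₁ = p₁) :
    setL π00 π01 π10 π11 ε p₀ p₁ ⊆ measSupp Q := by
  intro x hx
  obtain ⟨b, w, j, rfl⟩ := mem_setL_iff.1 hx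
  cases j
  · exact hinv.fword_mem_measSupp hP hQ (j := false) hp₀ hfix₀ _
  · exact hinv.fword_mem_measSupp hP hQ (j := true) hp₁ hfix₁ _

end BlackwellInvariant

end Invariance

theorem support_blackwell_eq_closure_L_general (π00 π01 π10 π11 ε : ℝ)
    (h00 : 0 < π00) (h01 : 0 < π01) (h10 : 0 < π10) (h11 : 0 < π11)
    (hrow0 : π00 + π01 = 1) (hrow1 : π10 + π11 = 1)
    (hdet : 0 < π00 * π11 - π01 * π10)
    (hε0 : 0 < ε) (hε : ε < 1 / 2)
    (p₀ p₁ : ℝ) (hp₀ : 0 < p₀) (hp₁ : 0 < p₁)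
    (hfix₀ : f₀ π00 π01 π10 π11 ε p₀ = p₀) (hfix₁ : f₁ π00 π01 π10 π11 ε p₁ = p₁)
    (Q : Measure ℝ) [IsProbabilityMeasure Q] (hQpos : Q (Set.Ioi 0) = 1)
    (hQinv : BlackwellInvariant π00 π01 π10 π11 ε Q) :
    measSupp Q = closure (setL π00 π01 π10 π11 ε p₀ p₁) := by
  have hP : BlackwellParams π00 π01 π10 π11 ε :=
    ⟨h00, h01, h10, h11, hrow0, hrow1, hdet, hε0, hε⟩
  have hQ : ∀ᵐ x ∂Q, 0 < x := (prob_compl_eq_zero_iff measurableSet_Ioi).2 hQpos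
  have hL : setL π00 π01 π10 π11 ε p₀ p₁ ⊆ Q.support :=
    measSupp_eq_support Q ▸ hQinv.setL_subset_measSupp hP hQ hp₀ hp₁ hfix₀ hfix₁
  have hK : closure (setL π00 π01 π10 π11 ε p₀ p₁) ∈ ae Q :=
    hQinv.ae_mem_of_mapsTo hP hQ (hP.isCompact_closure_setL hp₀ hp₁)
      (hP.closure_setL_subset_Ioi hp₀ hp₁) ⟨p₀, subset_closure (mem_setL_of_fixed hfix₀)⟩
      (hP.mapsTo_fb_closure_setL hp₀ hp₁)
  rw [measSupp_eq_support]
  exact (support_subset_of_isClosed isClosed_closure hK).antisymm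
    (closure_minimal hL isClosed_support)

/-- Theorem 3.1: the support of Blackwell's measure equals the closure of `L`. -/
theorem support_blackwell_eq_closure_L (π00 π01 π10 π11 ε : ℝ)
    (h00 : 0 < π00) (h01 : 0 < π01) (h10 : 0 < π10) (h11 : 0 < π11)
    (hrow0 : π00 + π01 = 1) (hrow1 : π10 + π11 = 1)
    (hdet : 0 < π00 * π11 - π01 * π10)
    (hε0 : 0 < ε) (hε : ε < 1 / 2)
    (p₀ p₁ : ℝ) (hp₀ : 0 < p₀) (hp₁ : 0 < p₁)
    (hfix₀ : f₀ π00 π01 π10 π11 ε p₀ = p₀) (hfix₁ : f₁ π00 π01 π10 π11 ε p₁ = p₁)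
    (huniq₀ : ∀ q : ℝ, 0 < q → f₀ π00 π01 π10 π11 ε q = q → q = p₀)
    (huniq₁ : ∀ q : ℝ, 0 < q → f₁ π00 π01 π10 π11 ε q = q → q = p₁)
    (Q : Measure ℝ) [IsProbabilityMeasure Q] (hQpos : Q (Set.Ioi 0) = 1)
    (hQinv : BlackwellInvariant π00 π01 π10 π11 ε Q) :
    measSupp Q = closure (setL π00 π01 π10 π11 ε p₀ p₁) :=
  support_blackwell_eq_closure_L_general π00 π01 π10 π11 ε h00 h01 h10 h11 hrow0 hrow1 hdet hε0 hε
    p₀ p₁ hp₀ hp₁ hfix₀ hfix₁ Q hQpos hQinv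
end

section
/- Continuity of Blackwell's measure (Theorem 3.4): Q has no point masses, i.e. Q({p}) = 0 for every p ∈ ℝ; equivalently, for every p ∈ supp(Q) and every η > 0 there is an open interval I_p containing p with Q(I_p) < η. -/
open MeasureTheory

/-!
If `Q` had atoms, a largest atom `p` would exist (only finitely many atoms exceed half the
supremum), and `p > 0`. The invariance equation writes `Q {p}` as `r₀(x₀) Q {x₀} + r₁(x₁) Q {x₁}`
over the (at most one each) positive preimages `x₀ ∈ f₀⁻¹{p}`, `x₁ ∈ f₁⁻¹{p}`. Since `f₀ > f₁`
pointwise and both are increasing, `x₀ < x₁`; since `r₀` is increasing and `r₀ + r₁ = 1`, the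
total weight `r₀(x₀) + r₁(x₁)` is `< 1`. Maximality of the atom then gives
`Q {p} ≤ c Q {p}` with `c < 1`, so `Q {p} = 0`.
-/

open Set
open scoped ENNReal

theorem exists_forall_measure_singleton_le {α : Type*} [MeasurableSpace α]
    [MeasurableSingletonClass α] [Nonempty α] (μ : Measure α) [IsFiniteMeasure μ] :
    ∃ p, ∀ q, μ {q} ≤ μ {p} := by
  set m := ⨆ q, μ {q}
  rcases eq_or_ne m 0 with hm0 | hm0
  · exact ⟨Classical.arbitrary α, fun q =>
      (le_iSup (fun q => μ {q}) q).trans (hm0.le.trans zero_le)⟩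
  have hm_top : m ≠ ⊤ := ne_top_of_le_ne_top (measure_ne_top μ univ)
    (iSup_le fun q => measure_mono (subset_univ _))
  have hbig_finite : {q | m / 2 ≤ μ {q}}.Finite :=
    Measure.finite_const_le_meas_of_disjoint_iUnion μ (ENNReal.half_pos hm0)
      (As := fun q => {q}) measurableSet_singleton
      (fun _ _ hij => disjoint_singleton.mpr hij) (measure_ne_top μ _)
  obtain ⟨q₀, hq₀⟩ := lt_iSup_iff.mp (ENNReal.half_lt_self hm0 hm_top)
  obtain ⟨p, hp, hpmax⟩ := exists_max_image _ (fun q => μ {q}) hbig_finite ⟨q₀, hq₀.le⟩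
  refine ⟨p, fun q => ?_⟩
  by_cases hq : m / 2 ≤ μ {q}
  · exact hpmax q hq
  · exact (not_le.mp hq).le.trans hp

theorem ENNReal.eq_zero_of_le_ofReal_mul {m : ℝ≥0∞} {c : ℝ} (hm : m ≠ ⊤) (hc : c < 1)
    (h : m ≤ ENNReal.ofReal c * m) : m = 0 := by
  by_contra hm0
  have : m * ENNReal.ofReal c < m * 1 :=
    ENNReal.mul_lt_mul_right hm0 hm (ENNReal.ofReal_lt_one.mpr hc)
  rw [mul_one, mul_comm] at this
  exact (h.trans_lt this).false

theorem setLIntegral_preimage_singleton_eq_zero_or {α β : Type*} [MeasurableSpace α]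
    [MeasurableSingletonClass α] {μ : Measure α} {s : Set α} (hs : ∀ᵐ x ∂μ, x ∈ s)
    {f : α → β} (hf : InjOn f s) (h : α → ℝ≥0∞) (p : β) :
    ∫⁻ x in f ⁻¹' {p}, h x ∂μ = 0 ∨
      ∃ x ∈ s, f x = p ∧ ∫⁻ x in f ⁻¹' {p}, h x ∂μ = h x * μ {x} := by
  have hfibre : ∫⁻ x in f ⁻¹' {p}, h x ∂μ = ∫⁻ x in f ⁻¹' {p} ∩ s, h x ∂μ :=
    setLIntegral_congr (inter_ae_eq_left_of_ae_eq_univ (ae_eq_univ.mpr hs)).symm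
  have hsub : (f ⁻¹' {p} ∩ s).Subsingleton := fun x hx y hy =>
    hf hx.2 hy.2 (hx.1.trans hy.1.symm)
  rcases hsub.eq_empty_or_singleton with hempty | ⟨x, hx⟩
  · left
    rw [hfibre, hempty, Measure.restrict_empty, lintegral_zero_measure]
  · have hxmem : x ∈ f ⁻¹' {p} ∩ s := hx ▸ mem_singleton x
    exact Or.inr ⟨x, hxmem.2, hxmem.1, by rw [hfibre, hx, lintegral_singleton]⟩

theorem div_lt_div_of_det_pos {a b c d x y : ℝ} (hx : 0 < c * x + d) (hy : 0 < c * y + d)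
    (hdet : 0 < a * d - b * c) (hxy : x < y) :
    (a * x + b) / (c * x + d) < (a * y + b) / (c * y + d) := by
  rw [div_lt_div_iff₀ hx hy]
  nlinarith [mul_pos hdet (sub_pos.mpr hxy)]

section Blackwell

variable {π00 π01 π10 π11 ε : ℝ}

theorem strictMonoOn_blackwell_ratio (h01 : 0 < π01) (h11 : 0 < π11)
    (hdet : 0 < π00 * π11 - π01 * π10) :
    StrictMonoOn (fun x => (π00 * x + π10) / (π01 * x + π11)) (Ioi 0) :=
  fun x hx y hy hxy =>
    div_lt_div_of_det_pos (by nlinarith [mem_Ioi.mp hx]) (by nlinarith [mem_Ioi.mp hy])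
      (by linarith) hxy

theorem injOn_f₀ (hε0 : 0 < ε) (hε1 : ε < 1) (h01 : 0 < π01) (h11 : 0 < π11)
    (hdet : 0 < π00 * π11 - π01 * π10) : InjOn (f₀ π00 π01 π10 π11 ε) (Ioi 0) :=
  fun _ hx _ hy hxy => (strictMonoOn_blackwell_ratio h01 h11 hdet).injOn hx hy
    (mul_left_cancel₀ (div_pos (sub_pos.mpr hε1) hε0).ne' hxy)

theorem injOn_f₁ (hε0 : 0 < ε) (hε1 : ε < 1) (h01 : 0 < π01) (h11 : 0 < π11)
    (hdet : 0 < π00 * π11 - π01 * π10) : InjOn (f₁ π00 π01 π10 π11 ε) (Ioi 0) :=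
  fun _ hx _ hy hxy => (strictMonoOn_blackwell_ratio h01 h11 hdet).injOn hx hy
    (mul_left_cancel₀ (div_pos hε0 (sub_pos.mpr hε1)).ne' hxy)

/-- `f₀ = ((1-ε)/ε)² f₁` with `((1-ε)/ε)² > 1`, so a common positive value of `f₀` and `f₁`
is attained by `f₀` at a smaller point. -/
theorem lt_of_f₀_eq_f₁ (hε0 : 0 < ε) (hε : ε < 1 / 2) (h01 : 0 < π01) (h11 : 0 < π11)
    (hdet : 0 < π00 * π11 - π01 * π10) {x₀ x₁ : ℝ} (hx₀ : 0 < x₀) (hx₁ : 0 < x₁)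
    (hpos : 0 < f₀ π00 π01 π10 π11 ε x₀)
    (heq : f₀ π00 π01 π10 π11 ε x₀ = f₁ π00 π01 π10 π11 ε x₁) : x₀ < x₁ := by
  set g := fun x => (π00 * x + π10) / (π01 * x + π11)
  have hC : 0 < (1 - ε) / ε := div_pos (by linarith) hε0
  have hc : 0 < ε / (1 - ε) := div_pos hε0 (by linarith)
  have hcC : ε / (1 - ε) < (1 - ε) / ε := by
    rw [div_lt_div_iff₀ (by linarith) hε0]; nlinarith
  have hg₀ : 0 < g x₀ := pos_of_mul_pos_right hpos hC.le
  have hg : g x₀ < g x₁ := by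
    have heq' : (1 - ε) / ε * g x₀ = ε / (1 - ε) * g x₁ := heq
    refine lt_of_mul_lt_mul_left ?_ hc.le
    exact heq' ▸ mul_lt_mul_of_pos_right hcC hg₀
  exact (strictMonoOn_blackwell_ratio h01 h11 hdet).lt_iff_lt hx₀ hx₁ |>.mp hg

theorem r₀_add_r₁ (hrow0 : π00 + π01 = 1) (hrow1 : π10 + π11 = 1) {x : ℝ} (hx : x + 1 ≠ 0) :
    r₀ π00 π01 π10 π11 ε x + r₁ π00 π01 π10 π11 ε x = 1 := by
  rw [r₀, r₁, ← add_div, div_eq_one_iff_eq hx]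
  linear_combination x * hrow0 + hrow1

theorem r₀_pos (hε0 : 0 < ε) (hε1 : ε < 1) (h00 : 0 < π00) (h01 : 0 < π01) (h10 : 0 < π10)
    (h11 : 0 < π11) {x : ℝ} (hx : 0 < x) : 0 < r₀ π00 π01 π10 π11 ε x := by
  have hε1' : 0 < 1 - ε := by linarith
  exact div_pos (by positivity) (by linarith)

theorem r₁_pos (hε0 : 0 < ε) (hε1 : ε < 1) (h00 : 0 < π00) (h01 : 0 < π01) (h10 : 0 < π10)
    (h11 : 0 < π11) {x : ℝ} (hx : 0 < x) : 0 < r₁ π00 π01 π10 π11 ε x := by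
  have hε1' : 0 < 1 - ε := by linarith
  exact div_pos (by positivity) (by linarith)

theorem strictMonoOn_r₀ (hε : ε < 1 / 2) (hrow0 : π00 + π01 = 1) (hrow1 : π10 + π11 = 1)
    (hdet : 0 < π00 * π11 - π01 * π10) :
    StrictMonoOn (r₀ π00 π01 π10 π11 ε) (Ioi (-1)) := by
  intro x hx y hy hxy
  have hx' : 0 < 1 * x + 1 := by linarith [mem_Ioi.mp hx]
  have hy' : 0 < 1 * y + 1 := by linarith [mem_Ioi.mp hy]
  -- with the row sums, the determinant of `r₀` as a Möbius map is `(1 - 2ε)(π00 - π10)`,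
  -- and `π00 - π10` is the determinant of `Π`
  have hdet' : 0 < ((1 - ε) * π00 + ε * π01) * 1 - ((1 - ε) * π10 + ε * π11) * 1 := by
    have hdiag : π00 - π10 = π00 * π11 - π01 * π10 := by
      linear_combination π10 * hrow0 - π00 * hrow1
    nlinarith [mul_pos (by linarith : (0 : ℝ) < 1 - 2 * ε) (hdiag ▸ hdet)]
  simpa only [r₀, one_mul] using div_lt_div_of_det_pos hx' hy' hdet' hxy

theorem r₀_add_r₁_lt_one (hε : ε < 1 / 2) (hrow0 : π00 + π01 = 1) (hrow1 : π10 + π11 = 1)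
    (hdet : 0 < π00 * π11 - π01 * π10) {x₀ x₁ : ℝ} (hx₀ : -1 < x₀) (hx₀₁ : x₀ < x₁) :
    r₀ π00 π01 π10 π11 ε x₀ + r₁ π00 π01 π10 π11 ε x₁ < 1 := by
  have hsum := r₀_add_r₁ (ε := ε) hrow0 hrow1 (x := x₁) (by linarith)
  have hmono := strictMonoOn_r₀ hε hrow0 hrow1 hdet hx₀ (mem_Ioi.mpr (hx₀.trans hx₀₁)) hx₀₁
  linarith

theorem exists_lt_one_measure_singleton_le_mul (h00 : 0 < π00) (h01 : 0 < π01) (h10 : 0 < π10)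
    (h11 : 0 < π11) (hrow0 : π00 + π01 = 1) (hrow1 : π10 + π11 = 1)
    (hdet : 0 < π00 * π11 - π01 * π10) (hε0 : 0 < ε) (hε : ε < 1 / 2) {Q : Measure ℝ}
    (hQ : ∀ᵐ x ∂Q, x ∈ Ioi 0) (hQinv : BlackwellInvariant π00 π01 π10 π11 ε Q) {p : ℝ}
    (hp : 0 < p) (hmax : ∀ q, Q {q} ≤ Q {p}) :
    ∃ c < 1, Q {p} ≤ ENNReal.ofReal c * Q {p} := by
  have hε1 : ε < 1 := by linarith
  have hsplit := hQinv {p} (measurableSet_singleton p) (singleton_subset_iff.mpr hp)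
  have hatom (c x : ℝ) : ENNReal.ofReal c * Q {x} ≤ ENNReal.ofReal c * Q {p} :=
    mul_le_mul_right (hmax x) _
  have hr₀ {x : ℝ} (hx : 0 < x) := r₀_pos hε0 hε1 h00 h01 h10 h11 hx
  have hr₁ {x : ℝ} (hx : 0 < x) := r₁_pos hε0 hε1 h00 h01 h10 h11 hx
  have hr₀₁ {x : ℝ} (hx : 0 < x) := r₀_add_r₁ (ε := ε) hrow0 hrow1 (x := x) (by linarith)
  rcases setLIntegral_preimage_singleton_eq_zero_or hQ (injOn_f₀ hε0 hε1 h01 h11 hdet)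
    (fun x => ENNReal.ofReal (r₀ π00 π01 π10 π11 ε x)) p with h₀ | ⟨x₀, hx₀, hfx₀, h₀⟩ <;>
  rcases setLIntegral_preimage_singleton_eq_zero_or hQ (injOn_f₁ hε0 hε1 h01 h11 hdet)
    (fun x => ENNReal.ofReal (r₁ π00 π01 π10 π11 ε x)) p with h₁ | ⟨x₁, hx₁, hfx₁, h₁⟩ <;>
  rw [h₀, h₁] at hsplit
  · exact ⟨0, zero_lt_one, by simp [hsplit]⟩
  · refine ⟨r₁ π00 π01 π10 π11 ε x₁, by linarith [hr₀ hx₁, hr₀₁ hx₁], ?_⟩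
    exact hsplit.le.trans ((zero_add _).le.trans (hatom _ _))
  · refine ⟨r₀ π00 π01 π10 π11 ε x₀, by linarith [hr₁ hx₀, hr₀₁ hx₀], ?_⟩
    exact hsplit.le.trans ((add_zero _).le.trans (hatom _ _))
  · have hx₀₁ : x₀ < x₁ :=
      lt_of_f₀_eq_f₁ hε0 hε h01 h11 hdet hx₀ hx₁ (hfx₀ ▸ hp) (hfx₀.trans hfx₁.symm)
    refine ⟨_, r₀_add_r₁_lt_one hε hrow0 hrow1 hdet (by linarith [mem_Ioi.mp hx₀]) hx₀₁, ?_⟩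
    refine hsplit.le.trans ?_
    rw [ENNReal.ofReal_add (hr₀ hx₀).le (hr₁ hx₁).le, add_mul]
    exact add_le_add (hatom _ _) (hatom _ _)

end Blackwell

/-- Theorem 3.4 (continuity of Blackwell's measure): `Q` has no point masses. -/
theorem blackwell_measure_continuous (π00 π01 π10 π11 ε : ℝ)
    (h00 : 0 < π00) (h01 : 0 < π01) (h10 : 0 < π10) (h11 : 0 < π11)
    (hrow0 : π00 + π01 = 1) (hrow1 : π10 + π11 = 1)
    (hdet : 0 < π00 * π11 - π01 * π10)
    (hε0 : 0 < ε) (hε : ε < 1 / 2)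
    (Q : MeasureTheory.Measure ℝ) [MeasureTheory.IsProbabilityMeasure Q]
    (hQpos : Q (Set.Ioi 0) = 1)
    (hQinv : BlackwellInvariant π00 π01 π10 π11 ε Q) :
    ∀ p : ℝ, Q {p} = 0 := by
  have hQ : ∀ᵐ x ∂Q, x ∈ Ioi (0 : ℝ) :=
    mem_ae_iff.mpr ((prob_compl_eq_zero_iff measurableSet_Ioi).mpr hQpos)
  obtain ⟨p, hmax⟩ := exists_forall_measure_singleton_le Q
  suffices hp : Q {p} = 0 from fun q => nonpos_iff_eq_zero.mp (hp ▸ hmax q)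
  rcases le_or_gt p 0 with hp0 | hp0
  · exact measure_mono_null (singleton_subset_iff.mpr (not_lt.mpr hp0)) (mem_ae_iff.mp hQ)
  obtain ⟨c, hc, hle⟩ := exists_lt_one_measure_singleton_le_mul h00 h01 h10 h11 hrow0 hrow1
    hdet hε0 hε hQ hQinv hp0 hmax
  exact ENNReal.eq_zero_of_le_ofReal_mul (measure_ne_top Q _) hc hle
end
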